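/- arXiv:2011.13912 — 5 statements merged into one kernel-verified Lean document; each statement's English description precedes it below -/
import Mathlib

section
/- Let x, s ∈ ℍ with x ∉ [s] (equivalently Re x ≠ Re s or ‖Im x‖ ≠ ‖Im s‖; this also gives s ∉ [x], so both x² − 2(Re s)·x + ‖s‖² and s² − 2(Re x)·s + ‖x‖² are nonzero). Then −(x² − 2(Re s)·x + ‖s‖²)⁻¹·(x − s̄) = (s − x̄)·(s² − 2(Re x)·s + ‖x‖²)⁻¹, and (s² − 2(Re x)·s + ‖x‖²)⁻¹·(s − x̄) = −(x − s̄)·(x² − 2(Re s)·x + ‖s‖²)⁻¹. (Equality of forms I and II of the left and right slice monogenic Cauchy kernels.) -/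
noncomputable section

open scoped Quaternion
open Finset

/-- The sphere of imaginary units of the quaternions. -/
def Sph : Set ℍ[ℝ] := {j | j.re = 0 ∧ ‖j‖ = 1}

/-- The 2-sphere `[x]` associated to a quaternion `x`. -/
def assocSphere (x : ℍ[ℝ]) : Set ℍ[ℝ] :=
  {y | ∃ j ∈ Sph, y = (x.re : ℍ[ℝ]) + ‖x.im‖ • j}

/-- A set `U ⊆ ℍ` is axially symmetric if `[x] ⊆ U` for every `x ∈ U`. -/
def AxiallySymmetric (U : Set ℍ[ℝ]) : Prop := ∀ x ∈ U, assocSphere x ⊆ U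

/-- `𝒰 = {(u,v) ∈ ℝ² : u + v·j ∈ U for all j ∈ 𝕊}`. -/
def slicePlane (U : Set ℍ[ℝ]) : Set (ℝ × ℝ) :=
  {p | ∀ j ∈ Sph, ((p.1 : ℍ[ℝ]) + p.2 • j) ∈ U}

/-- The operator `∂̄_j : H ↦ (1/2)(∂_u H + j·∂_v H)`. -/
def dbarL (j : ℍ[ℝ]) (H : ℝ × ℝ → ℍ[ℝ]) : ℝ × ℝ → ℍ[ℝ] :=
  fun p => (2 : ℝ)⁻¹ • (fderiv ℝ H p (1, 0) + j * fderiv ℝ H p (0, 1))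

/-- The right version `H ↦ (1/2)(∂_u H + (∂_v H)·j)`. -/
def dbarR (j : ℍ[ℝ]) (H : ℝ × ℝ → ℍ[ℝ]) : ℝ × ℝ → ℍ[ℝ] :=
  fun p => (2 : ℝ)⁻¹ • (fderiv ℝ H p (1, 0) + fderiv ℝ H p (0, 1) * j)

/-- `F₀, F₁` are (left) slice components of `F` on `U`. -/
def SliceCompL (U : Set ℍ[ℝ]) (F : ℍ[ℝ] → ℍ[ℝ]) (F₀ F₁ : ℝ × ℝ → ℍ[ℝ]) : Prop :=
  ∀ p ∈ slicePlane U, ∀ j ∈ Sph, F ((p.1 : ℍ[ℝ]) + p.2 • j) = F₀ p + j * F₁ p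

/-- `F₀, F₁` are (right) slice components of `F` on `U`. -/
def SliceCompR (U : Set ℍ[ℝ]) (F : ℍ[ℝ] → ℍ[ℝ]) (F₀ F₁ : ℝ × ℝ → ℍ[ℝ]) : Prop :=
  ∀ p ∈ slicePlane U, ∀ j ∈ Sph, F ((p.1 : ℍ[ℝ]) + p.2 • j) = F₀ p + F₁ p * j

/-- The pair `(F₀,F₁)` is `C^M` and `F₀ + j·F₁` is annihilated by `∂̄_j^M` on `𝒰`,
for every `j ∈ 𝕊`. -/
def PolyCompL (U : Set ℍ[ℝ]) (M : ℕ) (F₀ F₁ : ℝ × ℝ → ℍ[ℝ]) : Prop :=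
  ContDiffOn ℝ (M : ℕ∞) F₀ (slicePlane U) ∧ ContDiffOn ℝ (M : ℕ∞) F₁ (slicePlane U) ∧
  ∀ j ∈ Sph, ∀ p ∈ slicePlane U, (dbarL j)^[M] (fun q => F₀ q + j * F₁ q) p = 0

/-- Right-sided version of `PolyCompL`. -/
def PolyCompR (U : Set ℍ[ℝ]) (M : ℕ) (F₀ F₁ : ℝ × ℝ → ℍ[ℝ]) : Prop :=
  ContDiffOn ℝ (M : ℕ∞) F₀ (slicePlane U) ∧ ContDiffOn ℝ (M : ℕ∞) F₁ (slicePlane U) ∧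
  ∀ j ∈ Sph, ∀ p ∈ slicePlane U, (dbarR j)^[M] (fun q => F₀ q + F₁ q * j) p = 0

/-- `F` is left poly slice monogenic of order `M` on `U`. -/
def PolySliceMonL (U : Set ℍ[ℝ]) (M : ℕ) (F : ℍ[ℝ] → ℍ[ℝ]) : Prop :=
  ∃ F₀ F₁ : ℝ × ℝ → ℍ[ℝ], SliceCompL U F F₀ F₁ ∧ PolyCompL U M F₀ F₁

/-- `F` is right poly slice monogenic of order `M` on `U`. -/
def PolySliceMonR (U : Set ℍ[ℝ]) (M : ℕ) (F : ℍ[ℝ] → ℍ[ℝ]) : Prop :=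
  ∃ F₀ F₁ : ℝ × ℝ → ℍ[ℝ], SliceCompR U F F₀ F₁ ∧ PolyCompR U M F₀ F₁

/-- `F` is intrinsic poly slice monogenic of order `M` on `U`
(the slice components can be taken real-valued). -/
def PolySliceMonN (U : Set ℍ[ℝ]) (M : ℕ) (F : ℍ[ℝ] → ℍ[ℝ]) : Prop :=
  ∃ F₀ F₁ : ℝ × ℝ → ℍ[ℝ], (∀ p, (F₀ p).im = 0) ∧ (∀ p, (F₁ p).im = 0) ∧
    SliceCompL U F F₀ F₁ ∧ PolyCompL U M F₀ F₁

/-- `Q_s(x) = x² − 2(Re s)·x + ‖s‖²`. -/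
def Qker (s x : ℍ[ℝ]) : ℍ[ℝ] := x ^ 2 - 2 * (s.re : ℍ[ℝ]) * x + ((‖s‖ ^ 2 : ℝ) : ℍ[ℝ])

/-- The left slice monogenic Cauchy kernel (form I). -/
def SL (s x : ℍ[ℝ]) : ℍ[ℝ] := -((Qker s x)⁻¹ * (x - star s))

/-- The right slice monogenic Cauchy kernel (form I). -/
def SR (s x : ℍ[ℝ]) : ℍ[ℝ] := -((x - star s) * (Qker s x)⁻¹)

/-- The kernel `P_ℓ S_L⁻¹(s,x) = ((Re(s−x))^ℓ/ℓ!)·S_L⁻¹(s,x)`. -/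
def PkL (ℓ : ℕ) (s x : ℍ[ℝ]) : ℍ[ℝ] :=
  (((s - x).re ^ ℓ / ℓ.factorial : ℝ) : ℍ[ℝ]) * SL s x

/-- The kernel `P_ℓ S_R⁻¹(s,x) = ((Re(s−x))^ℓ/ℓ!)·S_R⁻¹(s,x)`. -/
def PkR (ℓ : ℕ) (s x : ℍ[ℝ]) : ℍ[ℝ] :=
  (((s - x).re ^ ℓ / ℓ.factorial : ℝ) : ℍ[ℝ]) * SR s x

/-- The kernel `Π_ℓ S_L⁻¹(s,x)`. -/
def PiL (ℓ : ℕ) (s x : ℍ[ℝ]) : ℍ[ℝ] :=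
  (ℓ.factorial : ℝ)⁻¹ • ∑ k ∈ Finset.range (ℓ + 1),
    (ℓ.choose k : ℝ) • ((star x) ^ k * SL s x * (-(star s)) ^ (ℓ - k))

/-- The kernel `Π_ℓ S_R⁻¹(s,x)`. -/
def PiR (ℓ : ℕ) (s x : ℍ[ℝ]) : ℍ[ℝ] :=
  (ℓ.factorial : ℝ)⁻¹ • ∑ k ∈ Finset.range (ℓ + 1),
    (ℓ.choose k : ℝ) • ((-(star s)) ^ (ℓ - k) * SR s x * (star x) ^ k)

/-- The complex plane `ℂ_j` inside the quaternions. -/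
def Cplane (j : ℍ[ℝ]) : Set ℍ[ℝ] := {z | ∃ u v : ℝ, z = (u : ℍ[ℝ]) + v • j}
namespace Statement0Aux
open Quaternion

lemma coe_smul_one (r : ℝ) : ((r : ℝ) : ℍ[ℝ]) = r • (1 : ℍ[ℝ]) := by
  rw [← Quaternion.coe_mul_eq_smul, mul_one]

lemma sq_eq' (a : ℍ[ℝ]) : a * a = (2 * a.re) • a - (normSq a) • (1 : ℍ[ℝ]) := by
  have h := a.self_mul_star
  rw [a.star_eq_two_re_sub, mul_sub, Quaternion.mul_coe_eq_smul] at h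
  rw [← coe_smul_one, ← h, sub_sub_cancel]

lemma norm_sq_coe (a : ℍ[ℝ]) : ((‖a‖ ^ 2 : ℝ) : ℍ[ℝ]) = (normSq a) • (1 : ℍ[ℝ]) := by
  rw [pow_two, ← normSq_eq_norm_mul_self, coe_smul_one]

lemma star_eq (a : ℍ[ℝ]) : star a = (2 * a.re) • (1 : ℍ[ℝ]) - a := by
  rw [a.star_eq_two_re_sub, coe_smul_one]

lemma Qker_eq (s x : ℍ[ℝ]) :
    Qker s x = (2 * (x.re - s.re)) • x + (normSq s - normSq x) • (1 : ℍ[ℝ]) := by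
  have h2 : 2 * (s.re : ℍ[ℝ]) * x = (2 * s.re) • x := by
    have : ((2 : ℝ) : ℍ[ℝ]) = (2 : ℍ[ℝ]) := by
      rw [show (2 : ℝ) = 1 + 1 by norm_num, Quaternion.coe_add, Quaternion.coe_one]
      norm_num
    rw [← Quaternion.coe_mul_eq_smul, Quaternion.coe_mul, this]
  rw [Qker, pow_two, sq_eq' x, norm_sq_coe, h2]
  module

lemma gen1 {A : Type*} [Ring A] [Algebra ℝ A] (X S : A) (aa bb nX nS : ℝ)
    (hX : X * X = (2 * bb) • X - nX • (1 : A)) (hS : S * S = (2 * aa) • S - nS • (1 : A)) :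
    ((2 * (bb - aa)) • X + (nS - nX) • (1 : A)) * (S - ((2 * bb) • (1 : A) - X))
      + (X - ((2 * aa) • (1 : A) - S)) * ((2 * (aa - bb)) • S + (nX - nS) • (1 : A)) = 0 := by
  simp only [sub_mul, mul_sub, add_mul, mul_add, smul_mul_assoc, mul_smul_comm, one_mul,
    mul_one, hX, hS]
  module

lemma gen2 {A : Type*} [Ring A] [Algebra ℝ A] (X S : A) (aa bb nX nS : ℝ)
    (hX : X * X = (2 * bb) • X - nX • (1 : A)) (hS : S * S = (2 * aa) • S - nS • (1 : A)) :
    (S - ((2 * bb) • (1 : A) - X)) * ((2 * (bb - aa)) • X + (nS - nX) • (1 : A))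
      + ((2 * (aa - bb)) • S + (nX - nS) • (1 : A)) * (X - ((2 * aa) • (1 : A) - S)) = 0 := by
  simp only [sub_mul, mul_sub, add_mul, mul_add, smul_mul_assoc, mul_smul_comm, one_mul,
    mul_one, hX, hS]
  module

lemma E1 (x s : ℍ[ℝ]) : Qker s x * (s - star x) + (x - star s) * Qker x s = 0 := by
  rw [Qker_eq s x, Qker_eq x s, star_eq x, star_eq s]
  exact gen1 x s s.re x.re (normSq x) (normSq s) (sq_eq' x) (sq_eq' s)

lemma E2 (x s : ℍ[ℝ]) : (s - star x) * Qker s x + Qker x s * (x - star s) = 0 := by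
  rw [Qker_eq s x, Qker_eq x s, star_eq x, star_eq s]
  exact gen2 x s s.re x.re (normSq x) (normSq s) (sq_eq' x) (sq_eq' s)

lemma normSq_decomp (a : ℍ[ℝ]) : normSq a = a.re ^ 2 + normSq a.im := by
  simp only [normSq_def', Quaternion.re_im, Quaternion.imI_im, Quaternion.imJ_im,
    Quaternion.imK_im]
  ring

lemma norm_im_eq {x s : ℍ[ℝ]} (h : normSq x.im = normSq s.im) : ‖x.im‖ = ‖s.im‖ := by
  have hx := normSq_eq_norm_mul_self x.im
  have hs := normSq_eq_norm_mul_self s.im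
  exact (mul_self_inj (norm_nonneg _) (norm_nonneg _)).mp (by rw [← hx, ← hs, h])

lemma Qker_zero {x s : ℍ[ℝ]} (h : Qker s x = 0) : x.re = s.re ∧ ‖x.im‖ = ‖s.im‖ := by
  rw [Qker_eq] at h
  have him := congrArg Quaternion.im h
  have hre := congrArg QuaternionAlgebra.re h
  simp only [Quaternion.im_add, Quaternion.im_smul, Quaternion.im_one, smul_zero, add_zero,
    Quaternion.im_zero, Quaternion.re_add, Quaternion.re_smul, Quaternion.re_one,
    smul_eq_mul, mul_one, Quaternion.re_zero] at him hre
  rcases smul_eq_zero.mp him with hc | hc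
  · have hre' : x.re = s.re := by linarith [mul_self_nonneg (x.re - s.re)]
    refine ⟨hre', norm_im_eq ?_⟩
    have hdx := normSq_decomp x
    have hds := normSq_decomp s
    rw [hre'] at hdx
    rw [hc, zero_mul, zero_add] at hre
    linarith
  · have hx0 : normSq x.im = 0 := by rw [hc, map_zero]
    have hdx := normSq_decomp x
    have hds := normSq_decomp s
    have key : (x.re - s.re) ^ 2 + normSq s.im = 0 := by nlinarith
    have h1 : (x.re - s.re) ^ 2 = 0 ∧ normSq s.im = 0 := by
      constructor <;> nlinarith [sq_nonneg (x.re - s.re), normSq_nonneg (a := s.im)]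
    have hre' : x.re = s.re := by nlinarith [h1.1]
    refine ⟨hre', norm_im_eq ?_⟩
    rw [hx0, h1.2]

lemma mem_assoc {x s : ℍ[ℝ]} (h1 : x.re = s.re) (h2 : ‖x.im‖ = ‖s.im‖) :
    x ∈ assocSphere s := by
  by_cases hz : x.im = 0
  · refine ⟨(show ℍ[ℝ] from ⟨0, 1, 0, 0⟩), ⟨rfl, ?_⟩, ?_⟩
    · have hn : normSq (show ℍ[ℝ] from ⟨0, 1, 0, 0⟩) = 1 := by rw [normSq_def']; norm_num
      rw [normSq_eq_norm_mul_self] at hn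
      exact (mul_self_inj (norm_nonneg _) (by norm_num)).mp (by rw [hn]; norm_num)
    · have : ‖s.im‖ = 0 := by rw [← h2, hz, norm_zero]
      have hx' : x = ((x.re : ℝ) : ℍ[ℝ]) := by
        conv_lhs => rw [← x.re_add_im]
        rw [hz, add_zero]
      rw [this, zero_smul, add_zero, ← h1]
      exact hx'
  · have hpos : (0 : ℝ) < ‖x.im‖ := norm_pos_iff.mpr hz
    refine ⟨‖x.im‖⁻¹ • x.im, ⟨?_, ?_⟩, ?_⟩
    · simp [Quaternion.re_smul]
    · rw [norm_smul, norm_inv, norm_norm, inv_mul_cancel₀ hpos.ne']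
    · rw [← h2, ← h1, smul_smul, mul_inv_cancel₀ hpos.ne', one_smul, x.re_add_im]

end Statement0Aux

/-- Equality of forms I and II of the left and right slice monogenic Cauchy kernels. -/
theorem statement0 (x s : ℍ[ℝ]) (hx : x ∉ assocSphere s) :
    Qker s x ≠ 0 ∧ Qker x s ≠ 0 ∧
    -((Qker s x)⁻¹ * (x - star s)) = (s - star x) * (Qker x s)⁻¹ ∧
    (Qker x s)⁻¹ * (s - star x) = -((x - star s) * (Qker s x)⁻¹) := by
  have hQ1 : Qker s x ≠ 0 := fun h => hx (Statement0Aux.mem_assoc (Statement0Aux.Qker_zero h).1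
    (Statement0Aux.Qker_zero h).2)
  have hQ2 : Qker x s ≠ 0 := by
    intro h
    obtain ⟨h1, h2⟩ := Statement0Aux.Qker_zero h
    exact hx (Statement0Aux.mem_assoc h1.symm h2.symm)
  have e1 : Qker s x * (s - star x) = -((x - star s) * Qker x s) := by
    have := Statement0Aux.E1 x s; linear_combination (norm := noncomm_ring) this
  have e2 : (s - star x) * Qker s x = -(Qker x s * (x - star s)) := by
    have := Statement0Aux.E2 x s; linear_combination (norm := noncomm_ring) this
  refine ⟨hQ1, hQ2, ?_, ?_⟩
  · have h : (s - star x) = (Qker s x)⁻¹ * (-((x - star s) * Qker x s)) := by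
      rw [← e1, inv_mul_cancel_left₀ hQ1]
    rw [h, mul_neg, neg_mul, mul_assoc, mul_assoc, mul_inv_cancel₀ hQ2, mul_one]
  · have h : Qker x s * (x - star s) = -((s - star x) * Qker s x) := by
      linear_combination (norm := noncomm_ring) e2
    have h2 : (x - star s) = (Qker x s)⁻¹ * (-((s - star x) * Qker s x)) := by
      rw [← h, inv_mul_cancel_left₀ hQ2]
    rw [h2, mul_neg, neg_mul, neg_neg, mul_assoc, mul_assoc, mul_inv_cancel₀ hQ1, mul_one]
end
end

section
/- Poly Splitting Lemma (quaternionic case). Let U ⊆ ℍ be axially symmetric and open, M ≥ 1, and let F : U → ℍ be left poly slice monogenic of order M. Let j, j′ ∈ 𝕊 with j·j′ = −j′·j. Then there exist functions G₁, G₂ : U ∩ ℂ_j → ℂ_j of class C^M that are polyanalytic of order M on U ∩ ℂ_j (i.e., writing points of ℂ_j as u + v·j, the functions (u,v) ↦ Gᵢ(u + v·j) are annihilated by the M-th iterate of H ↦ (1/2)(∂_u H + j·∂_v H)) such that F(z) = G₁(z) + G₂(z)·j′ for every z ∈ U ∩ ℂ_j. -/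
noncomputable section

open scoped Quaternion
open Finset

/- ## Auxiliary lemmas -/

section Aux

lemma aux_sph_normSq {j : ℍ[ℝ]} (hj : j ∈ Sph) : j.imI^2 + j.imJ^2 + j.imK^2 = 1 := by
  have h := hj.2
  have h2 : Quaternion.normSq j = 1 := by
    rw [Quaternion.normSq_eq_norm_mul_self, h]; ring
  rw [Quaternion.normSq_def', hj.1] at h2
  nlinarith [h2]

lemma aux_sph_mul_self {j : ℍ[ℝ]} (hj : j ∈ Sph) : j * j = -1 := by
  have hs : star j = -j := Quaternion.star_eq_neg.2 hj.1
  have h := Quaternion.self_mul_star (a := j)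
  rw [hs] at h
  have hn : Quaternion.normSq j = 1 := by
    rw [Quaternion.normSq_eq_norm_mul_self, hj.2]; ring
  rw [hn] at h
  have h2 : j * j = -(((1:ℝ)) : ℍ[ℝ]) := by
    have := congrArg Neg.neg h
    simpa using this
  simpa using h2

lemma aux_commutant {j q : ℍ[ℝ]} (hj : j ∈ Sph) (h : j * q = q * j) : q ∈ Cplane j := by
  refine ⟨q.re, q.imI*j.imI + q.imJ*j.imJ + q.imK*j.imK, ?_⟩
  have hn := aux_sph_normSq hj
  have hre := hj.1
  have h1 := congrArg QuaternionAlgebra.imI h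
  have h2 := congrArg QuaternionAlgebra.imJ h
  have h3 := congrArg QuaternionAlgebra.imK h
  simp only [Quaternion.imI_mul, Quaternion.imJ_mul, Quaternion.imK_mul, hre,
    zero_mul, mul_zero, add_zero, zero_add, sub_zero] at h1 h2 h3
  ext
  · simp [hre]
  · show q.imI = _
    simp only [Quaternion.imI_add, Quaternion.imI_coe, Quaternion.imI_smul, zero_add,
      smul_eq_mul]
    linear_combination (-q.imI) * hn - (j.imJ/2) * h3 + (j.imK/2) * h2
  · show q.imJ = _
    simp only [Quaternion.imJ_add, Quaternion.imJ_coe, Quaternion.imJ_smul, zero_add,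
      smul_eq_mul]
    linear_combination (-q.imJ) * hn + (j.imI/2) * h3 - (j.imK/2) * h1
  · show q.imK = _
    simp only [Quaternion.imK_add, Quaternion.imK_coe, Quaternion.imK_smul, zero_add,
      smul_eq_mul]
    linear_combination (-q.imK) * hn - (j.imI/2) * h2 + (j.imJ/2) * h1

lemma aux_neg_mem_sph {j : ℍ[ℝ]} (hj : j ∈ Sph) : -j ∈ Sph := by
  constructor
  · simp [hj.1]
  · simp [hj.2]

lemma aux_slice_set_eq {U : Set ℍ[ℝ]} (hax : AxiallySymmetric U) {j : ℍ[ℝ]} (hj : j ∈ Sph) :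
    {p : ℝ × ℝ | ((p.1 : ℍ[ℝ]) + p.2 • j) ∈ U} = slicePlane U := by
  ext p
  constructor
  · intro hp k hk
    set x : ℍ[ℝ] := (p.1 : ℍ[ℝ]) + p.2 • j with hx
    have hxre : x.re = p.1 := by simp [hx, hj.1]
    have hxim : x.im = p.2 • j := by
      ext <;> simp [hx, QuaternionAlgebra.im, hj.1]
    have hnorm : ‖x.im‖ = |p.2| := by
      rw [hxim, norm_smul, hj.2]; simp
    rcases le_or_gt 0 p.2 with hv | hv
    · exact hax x hp ⟨k, hk, by rw [hxre, hnorm, abs_of_nonneg hv]⟩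
    · refine hax x hp ⟨-k, aux_neg_mem_sph hk, ?_⟩
      rw [hxre, hnorm, abs_of_neg hv]
      module
  · intro hp
    exact hp j hj

lemma aux_dbar_ext (j : ℍ[ℝ]) (p : ℝ × ℝ) {a b : ℝ × ℝ → ℍ[ℝ]}
    (h : fderiv ℝ a p = fderiv ℝ b p) : dbarL j a p = dbarL j b p := by
  unfold dbarL; rw [h]

lemma aux_dbar_iter_congr {D : Set (ℝ×ℝ)} (hD : IsOpen D) {f g : ℝ×ℝ → ℍ[ℝ]}
    (hfg : ∀ p ∈ D, f p = g p) (j : ℍ[ℝ]) (k : ℕ) :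
    ∀ p ∈ D, (dbarL j)^[k] f p = (dbarL j)^[k] g p := by
  induction k with
  | zero => exact hfg
  | succ n ih =>
    intro p hp
    rw [Function.iterate_succ_apply', Function.iterate_succ_apply']
    have hEq : (dbarL j)^[n] f =ᶠ[nhds p] (dbarL j)^[n] g := by
      filter_upwards [hD.mem_nhds hp] with q hq using ih q hq
    exact aux_dbar_ext j p hEq.fderiv_eq

lemma aux_dbar_reg_step {D : Set (ℝ×ℝ)} (hD : IsOpen D) {K : ℝ×ℝ → ℍ[ℝ]} {n : ℕ} (j : ℍ[ℝ])
    (hK : ContDiffOn ℝ ((n+1 : ℕ) : ℕ∞) K D) :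
    ContDiffOn ℝ (n : ℕ∞) (dbarL j K) D := by
  have hf : ContDiffOn ℝ (n : ℕ∞) (fderiv ℝ K) D := by
    refine hK.fderiv_of_isOpen hD ?_
    push_cast
    norm_num
  unfold dbarL
  exact (((hf.clm_apply contDiffOn_const).add
    ((contDiffOn_const).mul (hf.clm_apply contDiffOn_const))).const_smul _)

lemma aux_dbar_iter_reg {D : Set (ℝ×ℝ)} (hD : IsOpen D) {H : ℝ×ℝ → ℍ[ℝ]} {M : ℕ} (j : ℍ[ℝ])
    (hH : ContDiffOn ℝ (M : ℕ∞) H D) :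
    ∀ k, k ≤ M → ContDiffOn ℝ ((M - k : ℕ) : ℕ∞) ((dbarL j)^[k] H) D := by
  intro k
  induction k with
  | zero => intro _; simpa using hH
  | succ n ih =>
    intro hn
    have h2 := ih (Nat.le_of_succ_le hn)
    rw [Function.iterate_succ_apply']
    have hMn : M - n = (M - (n+1)) + 1 := by omega
    rw [hMn] at h2
    exact aux_dbar_reg_step hD j h2

lemma aux_dbar_comm_step {D : Set (ℝ×ℝ)} (hD : IsOpen D) {K : ℝ×ℝ → ℍ[ℝ]} {j : ℍ[ℝ]}
    (hK : DifferentiableOn ℝ K D) (L : ℍ[ℝ] →L[ℝ] ℍ[ℝ]) (hL : ∀ x, L (j*x) = j * L x) :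
    ∀ p ∈ D, dbarL j (fun q => L (K q)) p = L (dbarL j K p) := by
  intro p hp
  have hKp : DifferentiableAt ℝ K p := (hK p hp).differentiableAt (hD.mem_nhds hp)
  have hcomp : fderiv ℝ (fun q => L (K q)) p = L.comp (fderiv ℝ K p) := by
    rw [show (fun q => L (K q)) = (⇑L) ∘ K from rfl,
      fderiv_comp p L.differentiableAt hKp, L.fderiv]
  unfold dbarL
  rw [hcomp]
  simp only [ContinuousLinearMap.coe_comp', Function.comp_apply]
  rw [← hL, ← map_add, ← map_smul]

lemma aux_dbar_iter_comm {D : Set (ℝ×ℝ)} (hD : IsOpen D) {H : ℝ×ℝ → ℍ[ℝ]} {M : ℕ} {j : ℍ[ℝ]}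
    (hH : ContDiffOn ℝ (M : ℕ∞) H D) (L : ℍ[ℝ] →L[ℝ] ℍ[ℝ]) (hL : ∀ x, L (j*x) = j * L x) :
    ∀ k, k ≤ M → ∀ p ∈ D, (dbarL j)^[k] (fun q => L (H q)) p = L ((dbarL j)^[k] H p) := by
  intro k
  induction k with
  | zero => intro _ p _; rfl
  | succ n ih =>
    intro hn p hp
    have h2 := aux_dbar_iter_reg hD j hH n (Nat.le_of_succ_le hn)
    have hdiff : DifferentiableOn ℝ ((dbarL j)^[n] H) D := by
      refine h2.differentiableOn ?_
      have h3 : 1 ≤ M - n := by omega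
      exact_mod_cast (by omega : M - n ≠ 0)
    rw [Function.iterate_succ_apply', Function.iterate_succ_apply']
    have hEq : (dbarL j)^[n] (fun q => L (H q)) =ᶠ[nhds p]
        (fun q => L ((dbarL j)^[n] H q)) := by
      filter_upwards [hD.mem_nhds hp] with q hq using ih (Nat.le_of_succ_le hn) q hq
    rw [aux_dbar_ext j p hEq.fderiv_eq]
    exact aux_dbar_comm_step hD hdiff L hL p hp

end Aux

/-- Poly Splitting Lemma (quaternionic case). -/
theorem statement2 (U : Set ℍ[ℝ]) (hax : AxiallySymmetric U) (hop : IsOpen U)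
    (M : ℕ) (hM : 1 ≤ M) (F : ℍ[ℝ] → ℍ[ℝ]) (hF : PolySliceMonL U M F)
    (j j' : ℍ[ℝ]) (hj : j ∈ Sph) (hj' : j' ∈ Sph) (hanti : j * j' = -(j' * j)) :
    ∃ G₁ G₂ : ℍ[ℝ] → ℍ[ℝ],
      (∀ z ∈ U ∩ Cplane j, G₁ z ∈ Cplane j ∧ G₂ z ∈ Cplane j) ∧
      ContDiffOn ℝ (M : ℕ∞) (fun p : ℝ × ℝ => G₁ ((p.1 : ℍ[ℝ]) + p.2 • j))
        {p : ℝ × ℝ | ((p.1 : ℍ[ℝ]) + p.2 • j) ∈ U} ∧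
      ContDiffOn ℝ (M : ℕ∞) (fun p : ℝ × ℝ => G₂ ((p.1 : ℍ[ℝ]) + p.2 • j))
        {p : ℝ × ℝ | ((p.1 : ℍ[ℝ]) + p.2 • j) ∈ U} ∧
      (∀ p : ℝ × ℝ, ((p.1 : ℍ[ℝ]) + p.2 • j) ∈ U →
        (dbarL j)^[M] (fun q : ℝ × ℝ => G₁ ((q.1 : ℍ[ℝ]) + q.2 • j)) p = 0) ∧
      (∀ p : ℝ × ℝ, ((p.1 : ℍ[ℝ]) + p.2 • j) ∈ U →
        (dbarL j)^[M] (fun q : ℝ × ℝ => G₂ ((q.1 : ℍ[ℝ]) + q.2 • j)) p = 0) ∧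
      (∀ z ∈ U ∩ Cplane j, F z = G₁ z + G₂ z * j') := by
  obtain ⟨F₀, F₁, hslice, hC0, hC1, hann⟩ := hF
  have hjj : j * j = -1 := aux_sph_mul_self hj
  have hj'j' : j' * j' = -1 := aux_sph_mul_self hj'
  have e1 : ∀ x : ℍ[ℝ], j * (j * x) = -x := by
    intro x; rw [← mul_assoc, hjj, neg_one_mul]
  have e2 : ∀ x : ℍ[ℝ], (x * j) * j = -x := by
    intro x; rw [mul_assoc, hjj, mul_neg_one]
  have s1 : ∀ q : ℍ[ℝ], j * (q + j * (q * j)) = j * q - q * j := by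
    intro q; rw [mul_add, e1, ← sub_eq_add_neg]
  have s2 : ∀ q : ℍ[ℝ], (q + j * (q * j)) * j = q * j - j * q := by
    intro q; rw [add_mul, mul_assoc j (q*j) j, e2, mul_neg, ← sub_eq_add_neg]
  -- the two continuous linear maps
  set mJ : ℍ[ℝ] →L[ℝ] ℍ[ℝ] :=
    (ContinuousLinearMap.mul ℝ ℍ[ℝ] j).comp ((ContinuousLinearMap.mul ℝ ℍ[ℝ]).flip j) with hmJ
  set L₁ : ℍ[ℝ] →L[ℝ] ℍ[ℝ] := (2:ℝ)⁻¹ • (ContinuousLinearMap.id ℝ ℍ[ℝ] - mJ) with hL₁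
  set L₂ : ℍ[ℝ] →L[ℝ] ℍ[ℝ] :=
    ((ContinuousLinearMap.mul ℝ ℍ[ℝ]).flip (-j')).comp
      ((2:ℝ)⁻¹ • (ContinuousLinearMap.id ℝ ℍ[ℝ] + mJ)) with hL₂
  have hL₁app : ∀ q, L₁ q = (2:ℝ)⁻¹ • (q - j * (q * j)) := by
    intro q; simp [hL₁, hmJ]
  have hL₂app : ∀ q, L₂ q = ((2:ℝ)⁻¹ • (q + j * (q * j))) * (-j') := by
    intro q
    simp only [hL₂, hmJ, ContinuousLinearMap.coe_comp', Function.comp_apply,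
      ContinuousLinearMap.smul_apply, ContinuousLinearMap.add_apply,
      ContinuousLinearMap.coe_id', id_eq, ContinuousLinearMap.flip_apply,
      ContinuousLinearMap.mul_apply']

  -- commutation with left multiplication by `j`
  have hL1c : ∀ x, L₁ (j * x) = j * L₁ x := by
    intro x
    rw [hL₁app, hL₁app, mul_smul_comm, mul_sub]
    rw [show j * ((j * x) * j) = -(x * j) from by
      rw [← mul_assoc, ← mul_assoc, hjj, neg_one_mul, neg_mul], e1]
  have hL2c : ∀ x, L₂ (j * x) = j * L₂ x := by
    intro x
    rw [hL₂app, hL₂app]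
    rw [show j * (((2:ℝ)⁻¹ • (x + j * (x * j))) * (-j')) =
      (j * ((2:ℝ)⁻¹ • (x + j * (x * j)))) * (-j') from (mul_assoc _ _ _).symm,
      mul_smul_comm, mul_add, ← mul_assoc j (j*x) j, e1, e1, neg_mul]
  -- the values commute with `j`
  have hcomm1 : ∀ q : ℍ[ℝ], j * (L₁ q) = (L₁ q) * j := by
    intro q
    rw [hL₁app, mul_smul_comm, smul_mul_assoc]
    congr 1
    rw [mul_sub, sub_mul, e1, mul_assoc j (q*j) j, e2, mul_neg]
    abel
  have hcomm2 : ∀ q : ℍ[ℝ], j * (L₂ q) = (L₂ q) * j := by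
    intro q
    have hanti3 : (-j') * j = j * j' := by rw [neg_mul]; rw [hanti]
    rw [hL₂app]
    rw [show j * (((2:ℝ)⁻¹ • (q + j * (q * j))) * (-j')) =
      (j * ((2:ℝ)⁻¹ • (q + j * (q * j)))) * (-j') from (mul_assoc _ _ _).symm,
      mul_smul_comm, s1, mul_neg, ← neg_mul, ← smul_neg, neg_sub,
      mul_assoc _ (-j') j, hanti3, ← mul_assoc _ j j', smul_mul_assoc, smul_mul_assoc,
      smul_mul_assoc, s2]
  -- the recomposition identity
  have hrecomp : ∀ q : ℍ[ℝ], L₁ q + (L₂ q) * j' = q := by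
    intro q
    rw [hL₁app, hL₂app, mul_assoc, neg_mul, hj'j', neg_neg, mul_one]
    module
  -- the slice plane
  have hcont : Continuous (fun p : ℝ × ℝ => ((p.1 : ℍ[ℝ]) + p.2 • j)) :=
    (Quaternion.continuous_coe.comp continuous_fst).add (continuous_snd.smul continuous_const)
  have hset : {p : ℝ × ℝ | ((p.1 : ℍ[ℝ]) + p.2 • j) ∈ U} = slicePlane U :=
    aux_slice_set_eq hax hj
  have hDo : IsOpen (slicePlane U) := hset ▸ (hop.preimage hcont)
  set H : ℝ × ℝ → ℍ[ℝ] := fun q => F₀ q + j * F₁ q with hHdef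
  have hH : ContDiffOn ℝ (M : ℕ∞) H (slicePlane U) :=
    hC0.add (contDiffOn_const.mul hC1)
  refine ⟨fun z => L₁ (F z), fun z => L₂ (F z), ?_, ?_, ?_, ?_, ?_, ?_⟩
  · intro z _
    exact ⟨aux_commutant hj (hcomm1 (F z)), aux_commutant hj (hcomm2 (F z))⟩
  · rw [hset]
    refine (L₁.contDiff.comp_contDiffOn hH).congr ?_
    intro p hp
    exact congrArg (⇑L₁) (hslice p hp j hj)
  · rw [hset]
    refine (L₂.contDiff.comp_contDiffOn hH).congr ?_
    intro p hp
    exact congrArg (⇑L₂) (hslice p hp j hj)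
  · intro p hp
    have hp' : p ∈ slicePlane U := hset ▸ hp
    have h1 : ∀ q ∈ slicePlane U,
        (fun q : ℝ × ℝ => L₁ (F ((q.1 : ℍ[ℝ]) + q.2 • j))) q = (fun q => L₁ (H q)) q := by
      intro q hq; simp only [hslice q hq j hj]; rfl
    rw [aux_dbar_iter_congr hDo h1 j M p hp',
      aux_dbar_iter_comm hDo hH L₁ hL1c M le_rfl p hp', hann j hj p hp', map_zero]
  · intro p hp
    have hp' : p ∈ slicePlane U := hset ▸ hp
    have h1 : ∀ q ∈ slicePlane U,
        (fun q : ℝ × ℝ => L₂ (F ((q.1 : ℍ[ℝ]) + q.2 • j))) q = (fun q => L₂ (H q)) q := by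
      intro q hq; simp only [hslice q hq j hj]; rfl
    rw [aux_dbar_iter_congr hDo h1 j M p hp',
      aux_dbar_iter_comm hDo hH L₂ hL2c M le_rfl p hp', hann j hj p hp', map_zero]
  · intro z _
    exact (hrecomp (F z)).symm
end
end

section
/- Let U ⊆ ℍ be an axially symmetric domain (nonempty, open, connected) and M ≥ 1. Let F : U → ℍ be left poly slice monogenic of order M with poly decomposition F(x) = ∑_{k=0}^{M−1} x̄^k·f_k(x), where f₀, …, f_{M−1} are left slice monogenic on U. Then F is intrinsic if and only if every f_k (k = 0, …, M−1) is intrinsic. -/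
noncomputable section

open scoped Quaternion
open Finset

namespace Statement5Aux

open Quaternion

instance : StarModule ℝ ℍ[ℝ] := ⟨fun r q => by ext <;> simp⟩

instance : ContinuousStar ℍ[ℝ] := ⟨by
  have h : (star : ℍ[ℝ] → ℍ[ℝ]) = fun a => ((2 * a.re : ℝ) : ℍ[ℝ]) - a := by
    funext a; exact a.star_eq_two_re_sub
  rw [h]
  exact (Quaternion.continuous_coe.comp
    (continuous_const.mul Quaternion.continuous_re)).sub continuous_id⟩

/-- a fixed imaginary unit -/
def jone : ℍ[ℝ] := ⟨0, 1, 0, 0⟩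

lemma norm_jone : ‖jone‖ = 1 := by
  have h : normSq jone = 1 := by
    rw [Quaternion.normSq_def']; simp [jone]
  have h2 : ‖jone‖ * ‖jone‖ = 1 := by rw [← Quaternion.normSq_eq_norm_mul_self, h]
  nlinarith [norm_nonneg jone]

lemma jone_mem : jone ∈ Sph := ⟨rfl, norm_jone⟩

lemma jone_ne : jone ≠ 0 := by
  intro h
  have := norm_jone
  rw [h] at this
  simp at this

lemma neg_mem {j : ℍ[ℝ]} (hj : j ∈ Sph) : -j ∈ Sph := by
  obtain ⟨h1, h2⟩ := hj
  exact ⟨by simp [h1], by simp [h2]⟩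

lemma star_of_mem {j : ℍ[ℝ]} (hj : j ∈ Sph) : star j = -j :=
  Quaternion.star_eq_neg.mpr hj.1

lemma mul_self_of_mem {j : ℍ[ℝ]} (hj : j ∈ Sph) : j * j = -1 := by
  have h1 : star j * j = ((normSq j : ℝ) : ℍ[ℝ]) := Quaternion.star_mul_self j
  have h2 : normSq j = 1 := by
    rw [Quaternion.normSq_eq_norm_mul_self, hj.2, one_mul]
  rw [star_of_mem hj, neg_mul, h2] at h1
  have := congrArg Neg.neg h1
  simpa using this

lemma cancel {x y : ℍ[ℝ]} (h : ∀ j ∈ Sph, x + j * y = 0) : x = 0 ∧ y = 0 := by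
  have h1 := h jone jone_mem
  have h2 := h (-jone) (neg_mem jone_mem)
  rw [neg_mul] at h2
  have hx2 : (2 : ℝ) • x = 0 := by
    have h3 : (x + jone * y) + (x + -(jone * y)) = 0 := by rw [h1, h2, add_zero]
    have h4 : x + x = 0 := by
      calc x + x = (x + jone * y) + (x + -(jone * y)) := by abel
        _ = 0 := h3
    rw [two_smul]; exact h4
  have hx : x = 0 := by
    rcases smul_eq_zero.mp hx2 with h | h
    · norm_num at h
    · exact h
  refine ⟨hx, ?_⟩
  rw [hx, zero_add] at h1
  rcases mul_eq_zero.mp h1 with h | h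
  · exact absurd h jone_ne
  · exact h

lemma cancel' {a b c d : ℍ[ℝ]} (h : ∀ j ∈ Sph, a + j * b = c + j * d) :
    a = c ∧ b = d := by
  have h2 := cancel (x := a - c) (y := b - d) (fun j hj => by
    have h3 := h j hj
    rw [mul_sub]
    calc a - c + (j * b - j * d) = (a + j * b) - (c + j * d) := by abel
      _ = 0 := sub_eq_zero.mpr h3)
  exact ⟨sub_eq_zero.mp h2.1, sub_eq_zero.mp h2.2⟩

lemma isCompact_Sph : IsCompact Sph := by
  have h1 : Sph = {j : ℍ[ℝ] | j.re = 0} ∩ Metric.sphere 0 1 := by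
    ext j
    simp [Sph, Metric.mem_sphere, dist_zero_right]
  rw [h1]
  exact (isCompact_sphere 0 1).inter_left
    (isClosed_eq Quaternion.continuous_re continuous_const)

lemma isOpen_slicePlane {U : Set ℍ[ℝ]} (hop : IsOpen U) : IsOpen (slicePlane U) := by
  rw [isOpen_iff_forall_mem_open]
  intro p hp
  set φ : (ℝ × ℝ) × ℍ[ℝ] → ℍ[ℝ] := fun q => (q.1.1 : ℍ[ℝ]) + q.1.2 • q.2 with hφ
  have hc : Continuous φ := by
    apply Continuous.add
    · exact Quaternion.continuous_coe.comp (continuous_fst.comp continuous_fst)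
    · exact (continuous_snd.comp continuous_fst).smul continuous_snd
  have hsub : ({p} : Set (ℝ × ℝ)) ×ˢ Sph ⊆ φ ⁻¹' U := by
    rintro ⟨q, j⟩ ⟨hq, hj⟩
    simp only [Set.mem_singleton_iff] at hq
    subst hq
    exact hp j hj
  obtain ⟨u, v, hu, hv, hpu, hSv, huv⟩ :=
    generalized_tube_lemma isCompact_singleton isCompact_Sph (hop.preimage hc) hsub
  exact ⟨u, fun q hq j hj => huv (Set.mk_mem_prod hq (hSv hj)), hu, hpu rfl⟩

lemma comp_unique {U : Set ℍ[ℝ]} {F : ℍ[ℝ] → ℍ[ℝ]} {F₀ F₁ G₀ G₁ : ℝ × ℝ → ℍ[ℝ]}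
    (h1 : SliceCompL U F F₀ F₁) (h2 : SliceCompL U F G₀ G₁) :
    ∀ p ∈ slicePlane U, F₀ p = G₀ p ∧ F₁ p = G₁ p := fun p hp =>
  cancel' fun j hj => (h1 p hp j hj).symm.trans (h2 p hp j hj)

lemma dbar_iter_congr {S : Set (ℝ × ℝ)} (hS : IsOpen S) (j : ℍ[ℝ]) :
    ∀ (n : ℕ) (H K : ℝ × ℝ → ℍ[ℝ]), (∀ q ∈ S, H q = K q) →
      ∀ p ∈ S, (dbarL j)^[n] H p = (dbarL j)^[n] K p := by
  intro n
  induction n with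
  | zero => intro H K h p hp; simpa using h p hp
  | succ n ih =>
    intro H K h p hp
    rw [Function.iterate_succ_apply, Function.iterate_succ_apply]
    refine ih _ _ ?_ p hp
    intro q hq
    unfold dbarL
    have he : H =ᶠ[nhds q] K := Filter.eventuallyEq_of_mem (hS.mem_nhds hq) h
    rw [he.fderiv_eq]

lemma polyComp_congr {U : Set ℍ[ℝ]} {Mn : ℕ} {F₀ F₁ G₀ G₁ : ℝ × ℝ → ℍ[ℝ]} (hop : IsOpen U)
    (hG : PolyCompL U Mn G₀ G₁)
    (h0 : ∀ p ∈ slicePlane U, F₀ p = G₀ p) (h1 : ∀ p ∈ slicePlane U, F₁ p = G₁ p) :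
    PolyCompL U Mn F₀ F₁ := by
  obtain ⟨hc0, hc1, hd⟩ := hG
  refine ⟨hc0.congr h0, hc1.congr h1, fun j hj p hp => ?_⟩
  rw [dbar_iter_congr (isOpen_slicePlane hop) j Mn _ (fun q => G₀ q + j * G₁ q)
    (fun q hq => by rw [h0 q hq, h1 q hq]) p hp]
  exact hd j hj p hp

lemma star_fderiv {G : ℝ × ℝ → ℍ[ℝ]} (h : ∀ q, star (G q) = G q) (p w : ℝ × ℝ) :
    star (fderiv ℝ G p w) = fderiv ℝ G p w := by
  have h2 : (fun q => star (G q)) = G := funext h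
  have h3 := fderiv_star (𝕜 := ℝ) (f := G) (x := p)
  rw [h2] at h3
  conv_rhs => rw [h3]
  simp

lemma im_eq_zero_iff {a : ℍ[ℝ]} : a.im = 0 ↔ star a = a := by
  rw [Quaternion.star_eq_self]
  constructor
  · intro h
    nth_rewrite 1 [← Quaternion.re_add_im a]
    rw [h, add_zero]
  · intro h
    simpa using congrArg Quaternion.im h

/-! ### The real polynomials `A`, `B` with `(u - vj)^n = A n + B n • j` -/

def AB : ℕ → ℝ × ℝ → ℝ × ℝ
  | 0 => fun _ => (1, 0)
  | n+1 => fun p => (p.1 * (AB n p).1 + p.2 * (AB n p).2,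
                     p.1 * (AB n p).2 - p.2 * (AB n p).1)

def Ap (n : ℕ) (p : ℝ × ℝ) : ℝ := (AB n p).1
def Bp (n : ℕ) (p : ℝ × ℝ) : ℝ := (AB n p).2

lemma Ap_zero (p : ℝ × ℝ) : Ap 0 p = 1 := rfl
lemma Bp_zero (p : ℝ × ℝ) : Bp 0 p = 0 := rfl
lemma Ap_succ (n : ℕ) (p : ℝ × ℝ) : Ap (n+1) p = p.1 * Ap n p + p.2 * Bp n p := rfl
lemma Bp_succ (n : ℕ) (p : ℝ × ℝ) : Bp (n+1) p = p.1 * Bp n p - p.2 * Ap n p := rfl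

lemma AB_hasDeriv (n : ℕ) (p : ℝ × ℝ) :
    ∃ Da Db : ℝ × ℝ →L[ℝ] ℝ, HasFDerivAt (Ap n) Da p ∧ HasFDerivAt (Bp n) Db p ∧
      Da (1,0) = n * Ap (n-1) p ∧ Da (0,1) = n * Bp (n-1) p ∧
      Db (1,0) = n * Bp (n-1) p ∧ Db (0,1) = -(n * Ap (n-1) p) := by
  induction n with
  | zero =>
    refine ⟨0, 0, ?_, ?_, by simp, by simp, by simp, by simp⟩
    · exact (hasFDerivAt_const 1 p).congr_fderiv rfl |>.congr_of_eventuallyEq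
        (Filter.Eventually.of_forall fun q => rfl)
    · exact (hasFDerivAt_const 0 p).congr_of_eventuallyEq
        (Filter.Eventually.of_forall fun q => rfl)
  | succ n ih =>
    obtain ⟨Da, Db, hA, hB, e1, e2, e3, e4⟩ := ih
    have hfst : HasFDerivAt (fun q : ℝ × ℝ => q.1) (ContinuousLinearMap.fst ℝ ℝ ℝ) p :=
      hasFDerivAt_fst
    have hsnd : HasFDerivAt (fun q : ℝ × ℝ => q.2) (ContinuousLinearMap.snd ℝ ℝ ℝ) p :=
      hasFDerivAt_snd
    refine ⟨(p.1 • Da + Ap n p • ContinuousLinearMap.fst ℝ ℝ ℝ) +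
            (p.2 • Db + Bp n p • ContinuousLinearMap.snd ℝ ℝ ℝ),
            (p.1 • Db + Bp n p • ContinuousLinearMap.fst ℝ ℝ ℝ) -
            (p.2 • Da + Ap n p • ContinuousLinearMap.snd ℝ ℝ ℝ), ?_, ?_, ?_, ?_, ?_, ?_⟩
    · have h := (hfst.mul hA).add (hsnd.mul hB)
      have he : (fun q : ℝ × ℝ => q.1 * Ap n q + q.2 * Bp n q) = Ap (n+1) :=
        funext fun q => (Ap_succ n q).symm
      rw [← he]
      exact h
    · have h := (hfst.mul hB).sub (hsnd.mul hA)
      have he : (fun q : ℝ × ℝ => q.1 * Bp n q - q.2 * Ap n q) = Bp (n+1) :=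
        funext fun q => (Bp_succ n q).symm
      rw [← he]
      exact h
    · simp only [ContinuousLinearMap.add_apply, ContinuousLinearMap.smul_apply,
        ContinuousLinearMap.coe_fst', ContinuousLinearMap.coe_snd', e1, e3,
        smul_eq_mul, Nat.add_sub_cancel]
      cases n with
      | zero => simp [Ap_zero, Bp_zero, Ap_succ]
      | succ m =>
        rw [Nat.add_sub_cancel] at e1 e3 ⊢
        simp only [Ap_succ, Bp_succ]
        push_cast
        ring
    · simp only [ContinuousLinearMap.add_apply, ContinuousLinearMap.smul_apply,
        ContinuousLinearMap.coe_fst', ContinuousLinearMap.coe_snd', e2, e4,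
        smul_eq_mul, Nat.add_sub_cancel]
      cases n with
      | zero => simp [Ap_zero, Bp_zero, Bp_succ]
      | succ m =>
        rw [Nat.add_sub_cancel] at e2 e4 ⊢
        simp only [Ap_succ, Bp_succ]
        push_cast
        ring
    · simp only [ContinuousLinearMap.sub_apply, ContinuousLinearMap.add_apply,
        ContinuousLinearMap.smul_apply, ContinuousLinearMap.coe_fst',
        ContinuousLinearMap.coe_snd', e1, e3, smul_eq_mul, Nat.add_sub_cancel]
      cases n with
      | zero => simp [Ap_zero, Bp_zero, Bp_succ]
      | succ m =>
        rw [Nat.add_sub_cancel] at e1 e3 ⊢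
        simp only [Ap_succ, Bp_succ]
        push_cast
        ring
    · simp only [ContinuousLinearMap.sub_apply, ContinuousLinearMap.add_apply,
        ContinuousLinearMap.smul_apply, ContinuousLinearMap.coe_fst',
        ContinuousLinearMap.coe_snd', e2, e4, smul_eq_mul, Nat.add_sub_cancel]
      cases n with
      | zero => simp [Ap_zero, Bp_zero, Ap_succ]
      | succ m =>
        rw [Nat.add_sub_cancel] at e2 e4 ⊢
        simp only [Ap_succ, Bp_succ]
        push_cast
        ring

/-! ### Quaternion algebra on slices -/

lemma key_alg {j : ℍ[ℝ]} (hj : j ∈ Sph) (a b : ℝ) (x y : ℍ[ℝ]) :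
    ((a : ℍ[ℝ]) + b • j) * (x + j * y) = (a • x - b • y) + j * (a • y + b • x) := by
  have hjj := mul_self_of_mem hj
  have t4 : j * (j * y) = -y := by rw [← mul_assoc, hjj, neg_one_mul]
  rw [add_mul, mul_add, mul_add, Quaternion.coe_mul_eq_smul, Quaternion.coe_mul_eq_smul,
    smul_mul_assoc, smul_mul_assoc, t4]
  rw [mul_add j (a • y) (b • x), mul_smul_comm a j y, mul_smul_comm b j x, smul_neg]
  abel

lemma star_slice {j : ℍ[ℝ]} (hj : j ∈ Sph) (p : ℝ × ℝ) :
    star ((p.1 : ℍ[ℝ]) + p.2 • j) = (p.1 : ℍ[ℝ]) + (-p.2) • j := by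
  rw [star_add, Quaternion.star_coe, Quaternion.star_smul, star_of_mem hj,
    smul_neg, neg_smul]

lemma starpow {j : ℍ[ℝ]} (hj : j ∈ Sph) (p : ℝ × ℝ) (k : ℕ) :
    (star ((p.1 : ℍ[ℝ]) + p.2 • j)) ^ k = ((Ap k p : ℝ) : ℍ[ℝ]) + j * ((Bp k p : ℝ) : ℍ[ℝ]) := by
  induction k with
  | zero => simp [Ap_zero, Bp_zero]
  | succ n ih =>
    rw [pow_succ', ih, star_slice hj,
      key_alg hj p.1 (-p.2) ((Ap n p : ℝ) : ℍ[ℝ]) ((Bp n p : ℝ) : ℍ[ℝ]),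
      Quaternion.smul_coe, Quaternion.smul_coe, Quaternion.smul_coe, Quaternion.smul_coe,
      ← Quaternion.coe_sub, ← Quaternion.coe_add]
    congr 1
    · exact congrArg (fun r : ℝ => (r : ℍ[ℝ])) (by rw [Ap_succ]; ring)
    · exact congrArg (fun z => j * z)
        (congrArg (fun r : ℝ => (r : ℍ[ℝ])) (by rw [Bp_succ]; ring))

/-! ### slice regularity -/

lemma diffAt {U : Set ℍ[ℝ]} {g : ℝ × ℝ → ℍ[ℝ]} {p : ℝ × ℝ} (hop : IsOpen U)
    (hc : ContDiffOn ℝ ((1 : ℕ) : ℕ∞) g (slicePlane U)) (hp : p ∈ slicePlane U) :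
    DifferentiableAt ℝ g p :=
  ((hc.differentiableOn (by simp)).differentiableAt
    ((isOpen_slicePlane hop).mem_nhds hp))

lemma CR_of_poly {U : Set ℍ[ℝ]} {g₀ g₁ : ℝ × ℝ → ℍ[ℝ]} {p : ℝ × ℝ} (hop : IsOpen U)
    (hpc : PolyCompL U 1 g₀ g₁) (hp : p ∈ slicePlane U) :
    DifferentiableAt ℝ g₀ p ∧ DifferentiableAt ℝ g₁ p ∧
      fderiv ℝ g₀ p (1,0) = fderiv ℝ g₁ p (0,1) ∧
      fderiv ℝ g₀ p (0,1) = -fderiv ℝ g₁ p (1,0) := by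
  obtain ⟨hc0, hc1, hd⟩ := hpc
  have hd0 : DifferentiableAt ℝ g₀ p := diffAt hop hc0 hp
  have hd1 : DifferentiableAt ℝ g₁ p := diffAt hop hc1 hp
  have key : ∀ j ∈ Sph,
      (fderiv ℝ g₀ p (1,0) - fderiv ℝ g₁ p (0,1)) +
        j * (fderiv ℝ g₁ p (1,0) + fderiv ℝ g₀ p (0,1)) = 0 := by
    intro j hj
    have h := hd j hj p hp
    rw [Function.iterate_one] at h
    unfold dbarL at h
    have hD : HasFDerivAt (fun q => g₀ q + j * g₁ q) _ p :=
      (hd0.hasFDerivAt.add (hd1.hasFDerivAt.const_mul j))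
    rw [hD.fderiv] at h
    have h2 : (fderiv ℝ g₀ p (1,0) + j * fderiv ℝ g₁ p (1,0)) +
        j * (fderiv ℝ g₀ p (0,1) + j * fderiv ℝ g₁ p (0,1)) = 0 := by
      rcases smul_eq_zero.mp h with h' | h'
      · norm_num at h'
      · simpa [ContinuousLinearMap.add_apply, ContinuousLinearMap.smul_apply,
          smul_eq_mul] using h'
    have t4 : j * (j * fderiv ℝ g₁ p (0,1)) = -(fderiv ℝ g₁ p (0,1)) := by
      rw [← mul_assoc, mul_self_of_mem hj, neg_one_mul]
    rw [mul_add, t4] at h2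
    rw [mul_add]
    have hre : (fderiv ℝ g₀ p (1,0) - fderiv ℝ g₁ p (0,1)) +
        (j * fderiv ℝ g₁ p (1,0) + j * fderiv ℝ g₀ p (0,1)) =
        (fderiv ℝ g₀ p (1,0) + j * fderiv ℝ g₁ p (1,0)) +
        (j * fderiv ℝ g₀ p (0,1) + -(fderiv ℝ g₁ p (0,1))) := by abel
    rw [hre, h2]
  obtain ⟨hx, hy⟩ := cancel key
  exact ⟨hd0, hd1, sub_eq_zero.mp hx, eq_neg_of_add_eq_zero_left (by rw [add_comm]; exact hy)⟩

/-! ### The functions `W` and `Φ` -/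

def W0 (M : ℕ) (h₀ h₁ : ℕ → ℝ × ℝ → ℍ[ℝ]) (m : ℕ) (p : ℝ × ℝ) : ℍ[ℝ] :=
  ∑ k ∈ Finset.range M, (k.descFactorial m : ℝ) •
    (Ap (k - m) p • h₀ k p - Bp (k - m) p • h₁ k p)

def W1 (M : ℕ) (h₀ h₁ : ℕ → ℝ × ℝ → ℍ[ℝ]) (m : ℕ) (p : ℝ × ℝ) : ℍ[ℝ] :=
  ∑ k ∈ Finset.range M, (k.descFactorial m : ℝ) •
    (Ap (k - m) p • h₁ k p + Bp (k - m) p • h₀ k p)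

lemma s_hasDeriv {g₀ g₁ : ℝ × ℝ → ℍ[ℝ]} {p : ℝ × ℝ}
    (hd₀ : DifferentiableAt ℝ g₀ p) (hd₁ : DifferentiableAt ℝ g₁ p)
    (cr1 : fderiv ℝ g₀ p (1,0) = fderiv ℝ g₁ p (0,1))
    (cr2 : fderiv ℝ g₀ p (0,1) = -fderiv ℝ g₁ p (1,0)) (n : ℕ) :
    ∃ C₀ C₁ : ℝ × ℝ →L[ℝ] ℍ[ℝ],
      HasFDerivAt (fun q => Ap n q • g₀ q - Bp n q • g₁ q) C₀ p ∧
      HasFDerivAt (fun q => Ap n q • g₁ q + Bp n q • g₀ q) C₁ p ∧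
      C₀ (1,0) - C₁ (0,1) = ((2 * n : ℝ)) • (Ap (n-1) p • g₀ p - Bp (n-1) p • g₁ p) ∧
      C₁ (1,0) + C₀ (0,1) = ((2 * n : ℝ)) • (Ap (n-1) p • g₁ p + Bp (n-1) p • g₀ p) := by
  obtain ⟨Da, Db, hA, hB, e1, e2, e3, e4⟩ := AB_hasDeriv n p
  refine ⟨_, _, (hA.smul hd₀.hasFDerivAt).sub (hB.smul hd₁.hasFDerivAt),
    (hA.smul hd₁.hasFDerivAt).add (hB.smul hd₀.hasFDerivAt), ?_, ?_⟩
  · simp only [ContinuousLinearMap.sub_apply, ContinuousLinearMap.add_apply,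
      ContinuousLinearMap.smul_apply, ContinuousLinearMap.smulRight_apply,
      e1, e2, e3, e4, cr1, cr2]
    module
  · simp only [ContinuousLinearMap.sub_apply, ContinuousLinearMap.add_apply,
      ContinuousLinearMap.smul_apply, ContinuousLinearMap.smulRight_apply,
      e1, e2, e3, e4, cr1, cr2]
    module

def PhiP (F₀ F₁ : ℝ × ℝ → ℍ[ℝ]) : ℕ → (ℝ × ℝ → ℍ[ℝ]) × (ℝ × ℝ → ℍ[ℝ])
  | 0 => (F₀, F₁)
  | m+1 =>
    (fun p => (2:ℝ)⁻¹ • (fderiv ℝ (PhiP F₀ F₁ m).1 p (1,0) - fderiv ℝ (PhiP F₀ F₁ m).2 p (0,1)),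
     fun p => (2:ℝ)⁻¹ • (fderiv ℝ (PhiP F₀ F₁ m).2 p (1,0) + fderiv ℝ (PhiP F₀ F₁ m).1 p (0,1)))

lemma PhiP_real {F₀ F₁ : ℝ × ℝ → ℍ[ℝ]} (h0 : ∀ p, star (F₀ p) = F₀ p)
    (h1 : ∀ p, star (F₁ p) = F₁ p) :
    ∀ m, (∀ p, star ((PhiP F₀ F₁ m).1 p) = (PhiP F₀ F₁ m).1 p) ∧
         (∀ p, star ((PhiP F₀ F₁ m).2 p) = (PhiP F₀ F₁ m).2 p) := by
  intro m
  induction m with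
  | zero => exact ⟨h0, h1⟩
  | succ m ih =>
    constructor
    · intro p
      simp only [PhiP]
      rw [Quaternion.star_smul, star_sub, star_fderiv ih.1, star_fderiv ih.2]
    · intro p
      simp only [PhiP]
      rw [Quaternion.star_smul, star_add, star_fderiv ih.1, star_fderiv ih.2]

lemma W_eq_Phi {U : Set ℍ[ℝ]} (hop : IsOpen U) (M : ℕ) (h₀ h₁ : ℕ → ℝ × ℝ → ℍ[ℝ])
    (hreg : ∀ k < M, ∀ p ∈ slicePlane U,
      DifferentiableAt ℝ (h₀ k) p ∧ DifferentiableAt ℝ (h₁ k) p ∧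
      fderiv ℝ (h₀ k) p (1,0) = fderiv ℝ (h₁ k) p (0,1) ∧
      fderiv ℝ (h₀ k) p (0,1) = -fderiv ℝ (h₁ k) p (1,0))
    (F₀ F₁ : ℝ × ℝ → ℍ[ℝ])
    (hb0 : ∀ p ∈ slicePlane U, F₀ p = W0 M h₀ h₁ 0 p)
    (hb1 : ∀ p ∈ slicePlane U, F₁ p = W1 M h₀ h₁ 0 p) :
    ∀ m, ∀ p ∈ slicePlane U, (PhiP F₀ F₁ m).1 p = W0 M h₀ h₁ m p ∧
      (PhiP F₀ F₁ m).2 p = W1 M h₀ h₁ m p := by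
  intro m
  induction m with
  | zero => intro p hp; exact ⟨hb0 p hp, hb1 p hp⟩
  | succ m ih =>
    intro p hp
    have hex : ∀ k, ∃ C₀ C₁ : ℝ × ℝ →L[ℝ] ℍ[ℝ], k < M →
        (HasFDerivAt (fun q => Ap (k-m) q • h₀ k q - Bp (k-m) q • h₁ k q) C₀ p ∧
         HasFDerivAt (fun q => Ap (k-m) q • h₁ k q + Bp (k-m) q • h₀ k q) C₁ p ∧
         C₀ (1,0) - C₁ (0,1) = ((2 * (k-m : ℕ) : ℝ)) •
           (Ap (k-m-1) p • h₀ k p - Bp (k-m-1) p • h₁ k p) ∧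
         C₁ (1,0) + C₀ (0,1) = ((2 * (k-m : ℕ) : ℝ)) •
           (Ap (k-m-1) p • h₁ k p + Bp (k-m-1) p • h₀ k p)) := by
      intro k
      by_cases hk : k < M
      · obtain ⟨hd0, hd1, c1, c2⟩ := hreg k hk p hp
        obtain ⟨C₀, C₁, a1, a2, a3, a4⟩ := s_hasDeriv hd0 hd1 c1 c2 (k-m)
        exact ⟨C₀, C₁, fun _ => ⟨a1, a2, a3, a4⟩⟩
      · exact ⟨0, 0, fun h => absurd h hk⟩
    choose C₀ C₁ hC using hex
    have hW0 : HasFDerivAt (W0 M h₀ h₁ m)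
        (∑ k ∈ Finset.range M, (k.descFactorial m : ℝ) • C₀ k) p := by
      unfold W0
      exact HasFDerivAt.fun_sum fun k hk =>
        ((hC k (Finset.mem_range.mp hk)).1).const_smul (k.descFactorial m : ℝ)
    have hW1 : HasFDerivAt (W1 M h₀ h₁ m)
        (∑ k ∈ Finset.range M, (k.descFactorial m : ℝ) • C₁ k) p := by
      unfold W1
      exact HasFDerivAt.fun_sum fun k hk =>
        ((hC k (Finset.mem_range.mp hk)).2.1).const_smul (k.descFactorial m : ℝ)
    have hf0 : fderiv ℝ (PhiP F₀ F₁ m).1 p = fderiv ℝ (W0 M h₀ h₁ m) p :=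
      Filter.EventuallyEq.fderiv_eq (Filter.eventuallyEq_of_mem
        ((isOpen_slicePlane hop).mem_nhds hp) (fun q hq => (ih q hq).1))
    have hf1 : fderiv ℝ (PhiP F₀ F₁ m).2 p = fderiv ℝ (W1 M h₀ h₁ m) p :=
      Filter.EventuallyEq.fderiv_eq (Filter.eventuallyEq_of_mem
        ((isOpen_slicePlane hop).mem_nhds hp) (fun q hq => (ih q hq).2))
    constructor
    · show (2:ℝ)⁻¹ • (fderiv ℝ (PhiP F₀ F₁ m).1 p (1,0) -
        fderiv ℝ (PhiP F₀ F₁ m).2 p (0,1)) = W0 M h₀ h₁ (m+1) p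
      rw [hf0, hf1, hW0.fderiv, hW1.fderiv]
      simp only [ContinuousLinearMap.coe_sum', Finset.sum_apply,
        ContinuousLinearMap.smul_apply]
      rw [← Finset.sum_sub_distrib, Finset.smul_sum]
      unfold W0
      apply Finset.sum_congr rfl
      intro k hk
      have h4 := (hC k (Finset.mem_range.mp hk)).2.2.1
      rw [← smul_sub ((k.descFactorial m : ℝ)), h4, smul_smul, smul_smul]
      rw [show k - m - 1 = k - (m+1) from by omega]
      congr 1
      push_cast [Nat.descFactorial_succ]
      ring
    · show (2:ℝ)⁻¹ • (fderiv ℝ (PhiP F₀ F₁ m).2 p (1,0) +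
        fderiv ℝ (PhiP F₀ F₁ m).1 p (0,1)) = W1 M h₀ h₁ (m+1) p
      rw [hf0, hf1, hW0.fderiv, hW1.fderiv]
      simp only [ContinuousLinearMap.coe_sum', Finset.sum_apply,
        ContinuousLinearMap.smul_apply]
      rw [← Finset.sum_add_distrib, Finset.smul_sum]
      unfold W1
      apply Finset.sum_congr rfl
      intro k hk
      have h4 := (hC k (Finset.mem_range.mp hk)).2.2.2
      rw [← smul_add ((k.descFactorial m : ℝ)), h4, smul_smul, smul_smul]
      rw [show k - m - 1 = k - (m+1) from by omega]
      congr 1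
      push_cast [Nat.descFactorial_succ]
      ring

lemma expand {U : Set ℍ[ℝ]} {M : ℕ} {F : ℍ[ℝ] → ℍ[ℝ]} {f : ℕ → ℍ[ℝ] → ℍ[ℝ]}
    {h₀ h₁ : ℕ → ℝ × ℝ → ℍ[ℝ]}
    (hdec : ∀ x ∈ U, F x = ∑ k ∈ Finset.range M, (star x) ^ k * f k x)
    (hcomp : ∀ k < M, SliceCompL U (f k) (h₀ k) (h₁ k)) :
    SliceCompL U F (W0 M h₀ h₁ 0) (W1 M h₀ h₁ 0) := by
  intro p hp j hj
  rw [hdec _ (hp j hj)]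
  have hterm : ∀ k ∈ Finset.range M,
      (star ((p.1 : ℍ[ℝ]) + p.2 • j)) ^ k * f k ((p.1 : ℍ[ℝ]) + p.2 • j)
        = (Ap k p • h₀ k p - Bp k p • h₁ k p) +
          j * (Ap k p • h₁ k p + Bp k p • h₀ k p) := by
    intro k hk
    rw [starpow hj p k, hcomp k (Finset.mem_range.mp hk) p hp j hj,
      Quaternion.mul_coe_eq_smul, key_alg hj]
  rw [Finset.sum_congr rfl hterm, Finset.sum_add_distrib, ← Finset.mul_sum]
  have hW0 : W0 M h₀ h₁ 0 p = ∑ k ∈ Finset.range M, (Ap k p • h₀ k p - Bp k p • h₁ k p) := by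
    unfold W0
    exact Finset.sum_congr rfl fun k _ => by simp [Nat.descFactorial]
  have hW1 : W1 M h₀ h₁ 0 p = ∑ k ∈ Finset.range M, (Ap k p • h₁ k p + Bp k p • h₀ k p) := by
    unfold W1
    exact Finset.sum_congr rfl fun k _ => by simp [Nat.descFactorial]
  rw [hW0, hW1]

lemma star_W0 {M : ℕ} {h₀ h₁ : ℕ → ℝ × ℝ → ℍ[ℝ]} {m : ℕ} {p : ℝ × ℝ}
    (h0 : ∀ k q, star (h₀ k q) = h₀ k q) (h1 : ∀ k q, star (h₁ k q) = h₁ k q) :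
    star (W0 M h₀ h₁ m p) = W0 M h₀ h₁ m p := by
  unfold W0
  rw [star_sum]
  refine Finset.sum_congr rfl fun k _ => ?_
  rw [Quaternion.star_smul, star_sub, Quaternion.star_smul, Quaternion.star_smul, h0, h1]

lemma star_W1 {M : ℕ} {h₀ h₁ : ℕ → ℝ × ℝ → ℍ[ℝ]} {m : ℕ} {p : ℝ × ℝ}
    (h0 : ∀ k q, star (h₀ k q) = h₀ k q) (h1 : ∀ k q, star (h₁ k q) = h₁ k q) :
    star (W1 M h₀ h₁ m p) = W1 M h₀ h₁ m p := by
  unfold W1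
  rw [star_sum]
  refine Finset.sum_congr rfl fun k _ => ?_
  rw [Quaternion.star_smul, star_add, Quaternion.star_smul, Quaternion.star_smul, h0, h1]

lemma extract {U : Set ℍ[ℝ]} (hop : IsOpen U) (M : ℕ) (h₀ h₁ : ℕ → ℝ × ℝ → ℍ[ℝ]) (F₀ F₁ : ℝ × ℝ → ℍ[ℝ])
    (hreg : ∀ k < M, ∀ p ∈ slicePlane U,
      DifferentiableAt ℝ (h₀ k) p ∧ DifferentiableAt ℝ (h₁ k) p ∧
      fderiv ℝ (h₀ k) p (1,0) = fderiv ℝ (h₁ k) p (0,1) ∧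
      fderiv ℝ (h₀ k) p (0,1) = -fderiv ℝ (h₁ k) p (1,0))
    (hb0 : ∀ p ∈ slicePlane U, F₀ p = W0 M h₀ h₁ 0 p)
    (hb1 : ∀ p ∈ slicePlane U, F₁ p = W1 M h₀ h₁ 0 p)
    (hr0 : ∀ p, star (F₀ p) = F₀ p) (hr1 : ∀ p, star (F₁ p) = F₁ p) :
    ∀ m < M, ∀ p ∈ slicePlane U, star (h₀ m p) = h₀ m p ∧ star (h₁ m p) = h₁ m p := by
  have hWP := W_eq_Phi hop M h₀ h₁ hreg F₀ F₁ hb0 hb1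
  have hPr := PhiP_real hr0 hr1
  have key : ∀ d m, m < M → M ≤ m + d → ∀ p ∈ slicePlane U,
      star (h₀ m p) = h₀ m p ∧ star (h₁ m p) = h₁ m p := by
    intro d
    induction d with
    | zero => intro m h1 h2; omega
    | succ d ih =>
      intro m hm hMd p hp
      have hk : ∀ k, m < k → k < M → ∀ q ∈ slicePlane U,
          star (h₀ k q) = h₀ k q ∧ star (h₁ k q) = h₁ k q :=
        fun k hk1 hk2 => ih k hk2 (by omega)
      have hfac : ((m.factorial : ℝ)) ≠ 0 :=
        Nat.cast_ne_zero.mpr m.factorial_ne_zero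
      constructor
      · have hs0 : star (W0 M h₀ h₁ m p) = W0 M h₀ h₁ m p := by
          rw [← (hWP m p hp).1]
          exact (hPr m).1 p
        have hzero : ∑ k ∈ Finset.range M, (k.descFactorial m : ℝ) •
            (Ap (k-m) p • (star (h₀ k p) - h₀ k p) -
             Bp (k-m) p • (star (h₁ k p) - h₁ k p)) = 0 := by
          calc ∑ k ∈ Finset.range M, (k.descFactorial m : ℝ) •
                (Ap (k-m) p • (star (h₀ k p) - h₀ k p) -
                 Bp (k-m) p • (star (h₁ k p) - h₁ k p))
              = star (W0 M h₀ h₁ m p) - W0 M h₀ h₁ m p := by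
                unfold W0
                rw [star_sum, ← Finset.sum_sub_distrib]
                refine Finset.sum_congr rfl fun k _ => ?_
                rw [Quaternion.star_smul, star_sub, Quaternion.star_smul,
                  Quaternion.star_smul]
                module
            _ = 0 := by rw [hs0, sub_self]
        have hsingle : ∑ k ∈ Finset.range M, (k.descFactorial m : ℝ) •
            (Ap (k-m) p • (star (h₀ k p) - h₀ k p) -
             Bp (k-m) p • (star (h₁ k p) - h₁ k p)) =
            (m.descFactorial m : ℝ) •
            (Ap (m-m) p • (star (h₀ m p) - h₀ m p) -
             Bp (m-m) p • (star (h₁ m p) - h₁ m p)) := by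
          refine Finset.sum_eq_single_of_mem m (Finset.mem_range.mpr hm) fun b hb hbm => ?_
          rcases lt_or_gt_of_ne hbm with hlt | hgt
          · rw [Nat.descFactorial_eq_zero_iff_lt.mpr hlt]
            simp
          · obtain ⟨e0, e1⟩ := hk b hgt (Finset.mem_range.mp hb) p hp
            rw [e0, e1, sub_self, sub_self, smul_zero, smul_zero, sub_self, smul_zero]
        rw [hsingle] at hzero
        rw [Nat.sub_self, Ap_zero, Bp_zero, one_smul, zero_smul, sub_zero,
          Nat.descFactorial_self] at hzero
        rcases smul_eq_zero.mp hzero with h' | h'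
        · exact absurd h' hfac
        · exact sub_eq_zero.mp h'
      · have hs1 : star (W1 M h₀ h₁ m p) = W1 M h₀ h₁ m p := by
          rw [← (hWP m p hp).2]
          exact (hPr m).2 p
        have hzero : ∑ k ∈ Finset.range M, (k.descFactorial m : ℝ) •
            (Ap (k-m) p • (star (h₁ k p) - h₁ k p) +
             Bp (k-m) p • (star (h₀ k p) - h₀ k p)) = 0 := by
          calc ∑ k ∈ Finset.range M, (k.descFactorial m : ℝ) •
                (Ap (k-m) p • (star (h₁ k p) - h₁ k p) +
                 Bp (k-m) p • (star (h₀ k p) - h₀ k p))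
              = star (W1 M h₀ h₁ m p) - W1 M h₀ h₁ m p := by
                unfold W1
                rw [star_sum, ← Finset.sum_sub_distrib]
                refine Finset.sum_congr rfl fun k _ => ?_
                rw [Quaternion.star_smul, star_add, Quaternion.star_smul,
                  Quaternion.star_smul]
                module
            _ = 0 := by rw [hs1, sub_self]
        have hsingle : ∑ k ∈ Finset.range M, (k.descFactorial m : ℝ) •
            (Ap (k-m) p • (star (h₁ k p) - h₁ k p) +
             Bp (k-m) p • (star (h₀ k p) - h₀ k p)) =
            (m.descFactorial m : ℝ) •
            (Ap (m-m) p • (star (h₁ m p) - h₁ m p) +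
             Bp (m-m) p • (star (h₀ m p) - h₀ m p)) := by
          refine Finset.sum_eq_single_of_mem m (Finset.mem_range.mpr hm) fun b hb hbm => ?_
          rcases lt_or_gt_of_ne hbm with hlt | hgt
          · rw [Nat.descFactorial_eq_zero_iff_lt.mpr hlt]
            simp
          · obtain ⟨e0, e1⟩ := hk b hgt (Finset.mem_range.mp hb) p hp
            rw [e0, e1, sub_self, sub_self, smul_zero, smul_zero, add_zero, smul_zero]
        rw [hsingle] at hzero
        rw [Nat.sub_self, Ap_zero, Bp_zero, one_smul, zero_smul, add_zero,
          Nat.descFactorial_self] at hzero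
        rcases smul_eq_zero.mp hzero with h' | h'
        · exact absurd h' hfac
        · exact sub_eq_zero.mp h'
  exact fun m hm => key M m hm (by omega)

end Statement5Aux
/-- `F` is intrinsic iff all its left slice monogenic components are intrinsic. -/
theorem statement5 (U : Set ℍ[ℝ]) (hax : AxiallySymmetric U) (hop : IsOpen U)
    (hconn : IsConnected U) (M : ℕ) (hM : 1 ≤ M)
    (F : ℍ[ℝ] → ℍ[ℝ]) (f : ℕ → ℍ[ℝ] → ℍ[ℝ])
    (hF : PolySliceMonL U M F)
    (hf : ∀ k < M, PolySliceMonL U 1 (f k))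
    (hdec : ∀ x ∈ U, F x = ∑ k ∈ Finset.range M, (star x) ^ k * f k x) :
    PolySliceMonN U M F ↔ ∀ k < M, PolySliceMonN U 1 (f k) := by
  classical
  open Statement5Aux in
  constructor
  · -- F intrinsic → each f k intrinsic
    rintro ⟨F₀, F₁, him0, him1, hsc, hpc⟩ k hk
    have hf' : ∀ k, ∃ g₀ g₁ : ℝ × ℝ → ℍ[ℝ], k < M →
        (SliceCompL U (f k) g₀ g₁ ∧ PolyCompL U 1 g₀ g₁) := by
      intro k
      by_cases hk' : k < M
      · obtain ⟨g₀, g₁, hs, hpoly⟩ := hf k hk'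
        exact ⟨g₀, g₁, fun _ => ⟨hs, hpoly⟩⟩
      · exact ⟨0, 0, fun h => absurd h hk'⟩
    choose h₀ h₁ hh using hf'
    have hreg : ∀ k < M, ∀ p ∈ slicePlane U,
        DifferentiableAt ℝ (h₀ k) p ∧ DifferentiableAt ℝ (h₁ k) p ∧
        fderiv ℝ (h₀ k) p (1,0) = fderiv ℝ (h₁ k) p (0,1) ∧
        fderiv ℝ (h₀ k) p (0,1) = -fderiv ℝ (h₁ k) p (1,0) :=
      fun k hk p hp => Statement5Aux.CR_of_poly hop (hh k hk).2 hp
    have hscW : SliceCompL U F (Statement5Aux.W0 M h₀ h₁ 0) (Statement5Aux.W1 M h₀ h₁ 0) :=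
      Statement5Aux.expand hdec (fun k hk => (hh k hk).1)
    have huniq := Statement5Aux.comp_unique hsc hscW
    have hr0 : ∀ p, star (F₀ p) = F₀ p := fun p => Statement5Aux.im_eq_zero_iff.mp (him0 p)
    have hr1 : ∀ p, star (F₁ p) = F₁ p := fun p => Statement5Aux.im_eq_zero_iff.mp (him1 p)
    have hstar := Statement5Aux.extract hop M h₀ h₁ F₀ F₁ hreg
      (fun p hp => (huniq p hp).1) (fun p hp => (huniq p hp).2) hr0 hr1
    refine ⟨Set.indicator (slicePlane U) (h₀ k), Set.indicator (slicePlane U) (h₁ k),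
      ?_, ?_, ?_, ?_⟩
    · intro p
      by_cases hp : p ∈ slicePlane U
      · rw [Set.indicator_of_mem hp]
        exact Statement5Aux.im_eq_zero_iff.mpr (hstar k hk p hp).1
      · rw [Set.indicator_of_notMem hp]
        rfl
    · intro p
      by_cases hp : p ∈ slicePlane U
      · rw [Set.indicator_of_mem hp]
        exact Statement5Aux.im_eq_zero_iff.mpr (hstar k hk p hp).2
      · rw [Set.indicator_of_notMem hp]
        rfl
    · intro p hp j hj
      rw [Set.indicator_of_mem hp, Set.indicator_of_mem hp]
      exact (hh k hk).1 p hp j hj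
    · exact Statement5Aux.polyComp_congr hop (hh k hk).2
        (fun p hp => Set.indicator_of_mem hp _) (fun p hp => Set.indicator_of_mem hp _)
  · -- each f k intrinsic → F intrinsic
    intro hall
    obtain ⟨G₀, G₁, hGs, hGp⟩ := hF
    have hall' : ∀ k, ∃ g₀ g₁ : ℝ × ℝ → ℍ[ℝ],
        (∀ p, star (g₀ p) = g₀ p) ∧ (∀ p, star (g₁ p) = g₁ p) ∧
        (k < M → (SliceCompL U (f k) g₀ g₁ ∧ PolyCompL U 1 g₀ g₁)) := by
      intro k
      by_cases hk : k < M
      · obtain ⟨g₀, g₁, h0, h1, hs, hpoly⟩ := hall k hk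
        exact ⟨g₀, g₁, fun p => Statement5Aux.im_eq_zero_iff.mp (h0 p),
          fun p => Statement5Aux.im_eq_zero_iff.mp (h1 p), fun _ => ⟨hs, hpoly⟩⟩
      · exact ⟨0, 0, fun p => star_zero _, fun p => star_zero _, fun h => absurd h hk⟩
    choose g₀ g₁ hg0 hg1 hgk using hall'
    have hscW : SliceCompL U F (Statement5Aux.W0 M g₀ g₁ 0) (Statement5Aux.W1 M g₀ g₁ 0) :=
      Statement5Aux.expand hdec (fun k hk => (hgk k hk).1)
    have huniq := Statement5Aux.comp_unique hscW hGs
    refine ⟨Statement5Aux.W0 M g₀ g₁ 0, Statement5Aux.W1 M g₀ g₁ 0, ?_, ?_, hscW, ?_⟩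
    · exact fun p => Statement5Aux.im_eq_zero_iff.mpr
        (Statement5Aux.star_W0 (fun k q => hg0 k q) (fun k q => hg1 k q))
    · exact fun p => Statement5Aux.im_eq_zero_iff.mpr
        (Statement5Aux.star_W1 (fun k q => hg0 k q) (fun k q => hg1 k q))
    · exact Statement5Aux.polyComp_congr hop hGp
        (fun p hp => (huniq p hp).1) (fun p hp => (huniq p hp).2)
end
end

section
/- Products preserving poly slice monogenicity. Let U ⊆ ℍ be axially symmetric and open and M ≥ 1. (i) If F : U → ℍ is intrinsic poly slice monogenic of order M and g : U → ℍ is left slice monogenic, then the pointwise product x ↦ F(x)·g(x) is left poly slice monogenic of order M on U. (ii) If F : U → ℍ is left poly slice monogenic of order M and g : U → ℍ is intrinsic slice monogenic, then x ↦ g(x)·F(x) is left poly slice monogenic of order M on U. (iii) If F is intrinsic poly slice monogenic of order M and g is intrinsic slice monogenic, then F·g = g·F is intrinsic poly slice monogenic of order M on U. -/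
noncomputable section

open scoped Quaternion
open Finset

namespace SliceAux
open Quaternion

/-- The quaternion unit `i`. -/
def qi : ℍ[ℝ] := ⟨0, 1, 0, 0⟩

@[simp] lemma qi_re : qi.re = 0 := rfl
@[simp] lemma qi_imI : qi.imI = 1 := rfl
@[simp] lemma qi_imJ : qi.imJ = 0 := rfl
@[simp] lemma qi_imK : qi.imK = 0 := rfl

lemma norm_qi : ‖qi‖ = 1 := by
  have h : ‖qi‖ * ‖qi‖ = 1 := by
    rw [← Quaternion.normSq_eq_norm_mul_self]
    simp [Quaternion.normSq_def']
  nlinarith [norm_nonneg qi]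

lemma qi_mem : qi ∈ Sph := ⟨rfl, norm_qi⟩

lemma neg_mem_Sph {j : ℍ[ℝ]} (h : j ∈ Sph) : -j ∈ Sph := by
  refine ⟨?_, ?_⟩
  · simp [h.1]
  · simp [h.2]

lemma sph_mul_self {j : ℍ[ℝ]} (h : j ∈ Sph) : j * j = -1 := by
  have hs : star j = -j := by
    rw [Quaternion.star_eq_two_re_sub, h.1]
    simp
  have h2 : j * star j = ((Quaternion.normSq j : ℝ) : ℍ[ℝ]) := by
    rw [Quaternion.self_mul_star]
  have h3 : Quaternion.normSq j = 1 := by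
    rw [Quaternion.normSq_eq_norm_mul_self, h.2, one_mul]
  rw [hs, h3, mul_neg] at h2
  have h4 : -(j * j) = (1 : ℍ[ℝ]) := by simpa using h2
  rw [← h4, neg_neg]

lemma real_eq {a : ℍ[ℝ]} (h : a.im = 0) : a = ((a.re : ℝ) : ℍ[ℝ]) := by
  conv_lhs => rw [← Quaternion.re_add_im a]
  rw [h, add_zero]

lemma real_commute {a : ℍ[ℝ]} (h : a.im = 0) (x : ℍ[ℝ]) : Commute a x := by
  rw [real_eq h]
  exact (Quaternion.coe_commutes a.re x)

lemma mul_im_zero {a b : ℍ[ℝ]} (ha : a.im = 0) (hb : b.im = 0) : (a * b).im = 0 := by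
  rw [real_eq ha, real_eq hb, ← Quaternion.coe_mul]
  exact Quaternion.im_coe _

lemma mem_slicePlane_iff {U : Set ℍ[ℝ]} (hax : AxiallySymmetric U) {p : ℝ × ℝ} :
    p ∈ slicePlane U ↔ ((p.1 : ℍ[ℝ]) + p.2 • qi) ∈ U := by
  constructor
  · intro h; exact h qi qi_mem
  · intro h j hj
    set x : ℍ[ℝ] := (p.1 : ℍ[ℝ]) + p.2 • qi with hx
    have hre : x.re = p.1 := by simp [hx]
    have him : x.im = p.2 • qi := by
      ext <;> simp [hx]
    have hnorm : ‖x.im‖ = |p.2| := by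
      rw [him, norm_smul, norm_qi, mul_one, Real.norm_eq_abs]
    rcases le_or_gt 0 p.2 with hv | hv
    · refine hax x h ⟨j, hj, ?_⟩
      rw [hre, hnorm, abs_of_nonneg hv]
    · refine hax x h ⟨-j, neg_mem_Sph hj, ?_⟩
      rw [hre, hnorm, abs_of_neg hv, smul_neg, neg_smul, neg_neg]

lemma slicePlane_isOpen {U : Set ℍ[ℝ]} (hax : AxiallySymmetric U) (hop : IsOpen U) :
    IsOpen (slicePlane U) := by
  have : slicePlane U = (fun p : ℝ × ℝ => ((p.1 : ℍ[ℝ]) + p.2 • qi)) ⁻¹' U := by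
    ext p; exact mem_slicePlane_iff hax
  rw [this]
  refine hop.preimage ?_
  exact ((Quaternion.continuous_coe).comp continuous_fst).add
    (continuous_snd.smul continuous_const)

lemma exists_repr {U : Set ℍ[ℝ]} (hax : AxiallySymmetric U) {x : ℍ[ℝ]} (hx : x ∈ U) :
    ∃ j ∈ Sph, x = ((x.re : ℝ) : ℍ[ℝ]) + ‖x.im‖ • j ∧ (x.re, ‖x.im‖) ∈ slicePlane U := by
  have hsp : (x.re, ‖x.im‖) ∈ slicePlane U := by
    intro j hj
    exact hax x hx ⟨j, hj, rfl⟩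
  by_cases h0 : x.im = 0
  · refine ⟨qi, qi_mem, ?_, hsp⟩
    rw [h0, norm_zero, zero_smul, add_zero]
    conv_lhs => rw [← Quaternion.re_add_im x]
    rw [h0, add_zero]
  · have hn : ‖x.im‖ ≠ 0 := norm_ne_zero_iff.mpr h0
    refine ⟨‖x.im‖⁻¹ • x.im, ⟨?_, ?_⟩, ?_, hsp⟩
    · simp [Quaternion.re_im]
    · rw [norm_smul, norm_inv, norm_norm, inv_mul_cancel₀ hn]
    · rw [smul_smul, mul_inv_cancel₀ hn, one_smul]
      exact (Quaternion.re_add_im x).symm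

/-- Continuous linear component maps. -/
def reCLM : ℍ[ℝ] →L[ℝ] ℝ := LinearMap.toContinuousLinearMap (QuaternionAlgebra.reₗ _ _ _)
def imICLM : ℍ[ℝ] →L[ℝ] ℝ := LinearMap.toContinuousLinearMap (QuaternionAlgebra.imIₗ _ _ _)
def imJCLM : ℍ[ℝ] →L[ℝ] ℝ := LinearMap.toContinuousLinearMap (QuaternionAlgebra.imJₗ _ _ _)
def imKCLM : ℍ[ℝ] →L[ℝ] ℝ := LinearMap.toContinuousLinearMap (QuaternionAlgebra.imKₗ _ _ _)

@[simp] lemma reCLM_apply (x : ℍ[ℝ]) : reCLM x = x.re := rfl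
@[simp] lemma imICLM_apply (x : ℍ[ℝ]) : imICLM x = x.imI := rfl
@[simp] lemma imJCLM_apply (x : ℍ[ℝ]) : imJCLM x = x.imJ := rfl
@[simp] lemma imKCLM_apply (x : ℍ[ℝ]) : imKCLM x = x.imK := rfl

lemma dbar_congr {S : Set (ℝ × ℝ)} (hS : IsOpen S) {A B : ℝ × ℝ → ℍ[ℝ]}
    (h : ∀ q ∈ S, A q = B q) {p : ℝ × ℝ} (hp : p ∈ S) (j : ℍ[ℝ]) :
    dbarL j A p = dbarL j B p := by
  have hfd : fderiv ℝ A p = fderiv ℝ B p :=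
    Filter.EventuallyEq.fderiv_eq (Filter.eventuallyEq_of_mem (hS.mem_nhds hp) h)
  simp only [dbarL, hfd]

lemma dbar_mul {j : ℍ[ℝ]} {K G : ℝ × ℝ → ℍ[ℝ]} {p : ℝ × ℝ}
    (hK : DifferentiableAt ℝ K p) (hG : DifferentiableAt ℝ G p)
    (hcomm : K p * j = j * K p) :
    dbarL j (fun q => K q * G q) p = dbarL j K p * G p + K p * dbarL j G p := by
  have h : fderiv ℝ (fun q => K q * G q) p = _ := fderiv_mul' hK hG
  simp only [dbarL, h, ContinuousLinearMap.add_apply, ContinuousLinearMap.smul_apply, op_smul_eq_mul,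
    ContinuousLinearMap.smulRight_apply, smul_eq_mul, smul_mul_assoc, mul_smul_comm,
    ← smul_add]
  congr 1
  have hKj : K p * (j * fderiv ℝ G p (0, 1)) = j * (K p * fderiv ℝ G p (0, 1)) := by
    rw [← mul_assoc, hcomm, mul_assoc]
  rw [add_mul, mul_add, mul_add, hKj]
  noncomm_ring

lemma dbar_mul_left {j : ℍ[ℝ]} {K G : ℝ × ℝ → ℍ[ℝ]} {p : ℝ × ℝ}
    (hG : DifferentiableAt ℝ G p) (hK : DifferentiableAt ℝ K p)
    (hcomm : G p * j = j * G p) :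
    dbarL j (fun q => G q * K q) p = dbarL j G p * K p + G p * dbarL j K p := by
  have h : fderiv ℝ (fun q => G q * K q) p = _ := fderiv_mul' hG hK
  simp only [dbarL, h, ContinuousLinearMap.add_apply, ContinuousLinearMap.smul_apply, op_smul_eq_mul,
    ContinuousLinearMap.smulRight_apply, smul_eq_mul, smul_mul_assoc, mul_smul_comm,
    ← smul_add]
  congr 1
  have hGj : j * (G p * fderiv ℝ K p (0, 1)) = G p * (j * fderiv ℝ K p (0, 1)) := by
    rw [← mul_assoc, ← hcomm, mul_assoc]
  rw [add_mul, mul_add, mul_add, hGj]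
  noncomm_ring

lemma fderiv_comm {j : ℍ[ℝ]} {K : ℝ × ℝ → ℍ[ℝ]} {S : Set (ℝ × ℝ)} (hS : IsOpen S)
    (hKd : ∀ q ∈ S, DifferentiableAt ℝ K q)
    (hc : ∀ q ∈ S, K q * j = j * K q) {p : ℝ × ℝ} (hp : p ∈ S) (v : ℝ × ℝ) :
    fderiv ℝ K p v * j = j * fderiv ℝ K p v := by
  have h1 : fderiv ℝ (fun q => K q * j) p = (fderiv ℝ K p).smulRight j :=
    fderiv_mul_const' (hKd p hp) j
  have h2 : fderiv ℝ (fun q => j * K q) p = j • fderiv ℝ K p :=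
    fderiv_const_mul (hKd p hp) j
  have h3 : fderiv ℝ (fun q => K q * j) p = fderiv ℝ (fun q => j * K q) p :=
    Filter.EventuallyEq.fderiv_eq (Filter.eventuallyEq_of_mem (hS.mem_nhds hp) hc)
  have := congrArg (fun (L : (ℝ × ℝ) →L[ℝ] ℍ[ℝ]) => L v) (h1.symm.trans (h3.trans h2))
  simpa [smul_eq_mul] using this

lemma dbar_comm {j : ℍ[ℝ]} {K : ℝ × ℝ → ℍ[ℝ]} {S : Set (ℝ × ℝ)} (hS : IsOpen S)
    (hKd : ∀ q ∈ S, DifferentiableAt ℝ K q)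
    (hc : ∀ q ∈ S, K q * j = j * K q) {p : ℝ × ℝ} (hp : p ∈ S) :
    dbarL j K p * j = j * dbarL j K p := by
  have h1 := fderiv_comm hS hKd hc hp (1, 0)
  have h2 := fderiv_comm hS hKd hc hp (0, 1)
  simp only [dbarL, smul_mul_assoc, mul_smul_comm, add_mul, mul_add, h1, mul_assoc, h2]

lemma contDiffOn_dbar {S : Set (ℝ × ℝ)} (hS : IsOpen S) (j : ℍ[ℝ]) {H : ℝ × ℝ → ℍ[ℝ]} {n : ℕ}
    (h : ContDiffOn ℝ ((n + 1 : ℕ) : ℕ∞) H S) : ContDiffOn ℝ (n : ℕ∞) (dbarL j H) S := by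
  have hf : ContDiffOn ℝ (n : ℕ∞) (fderiv ℝ H) S :=
    h.fderiv_of_isOpen hS (by exact_mod_cast le_refl ((n + 1 : ℕ) : ℕ∞))
  have h1 : ContDiffOn ℝ (n : ℕ∞) (fun p => fderiv ℝ H p (1, 0)) S :=
    hf.clm_apply contDiffOn_const
  have h2 : ContDiffOn ℝ (n : ℕ∞) (fun p => fderiv ℝ H p (0, 1)) S :=
    hf.clm_apply contDiffOn_const
  exact ContDiffOn.const_smul _ (h1.add (contDiffOn_const.mul h2))

lemma iter_reg {S : Set (ℝ × ℝ)} (hS : IsOpen S) {j : ℍ[ℝ]} {K : ℝ × ℝ → ℍ[ℝ]} {M : ℕ}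
    (hK : ContDiffOn ℝ (M : ℕ∞) K S) :
    ∀ m, m ≤ M → ContDiffOn ℝ ((M - m : ℕ) : ℕ∞) ((dbarL j)^[m] K) S := by
  intro m
  induction m with
  | zero => intro _; simpa using hK
  | succ m ih =>
    intro hm
    have hreg := ih (by omega)
    have heq : (M - m : ℕ) = (M - (m + 1) : ℕ) + 1 := by omega
    rw [heq] at hreg
    rw [Function.iterate_succ_apply']
    exact contDiffOn_dbar hS j hreg

lemma iter_diff {S : Set (ℝ × ℝ)} (hS : IsOpen S) {j : ℍ[ℝ]} {K : ℝ × ℝ → ℍ[ℝ]} {M : ℕ}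
    (hK : ContDiffOn ℝ (M : ℕ∞) K S) {m : ℕ} (hm : m < M) :
    ∀ q ∈ S, DifferentiableAt ℝ ((dbarL j)^[m] K) q := by
  intro q hq
  have hreg := iter_reg (j := j) hS hK m (by omega)
  have h1 : (1 : ℕ∞) ≤ ((M - m : ℕ) : ℕ∞) := by
    exact_mod_cast Nat.one_le_iff_ne_zero.mpr (by omega)
  exact ((hreg.differentiableOn (by exact_mod_cast (show M - m ≠ 0 by omega))) q hq).differentiableAt
    (hS.mem_nhds hq)

lemma iter_comm {S : Set (ℝ × ℝ)} (hS : IsOpen S) {j : ℍ[ℝ]} {K : ℝ × ℝ → ℍ[ℝ]} {M : ℕ}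
    (hK : ContDiffOn ℝ (M : ℕ∞) K S) (hc : ∀ q ∈ S, K q * j = j * K q) :
    ∀ m, m ≤ M → ∀ q ∈ S, ((dbarL j)^[m] K) q * j = j * ((dbarL j)^[m] K) q := by
  intro m
  induction m with
  | zero => intro _; exact hc
  | succ m ih =>
    intro hm q hq
    rw [Function.iterate_succ_apply']
    exact dbar_comm hS (iter_diff hS hK (by omega)) (ih (by omega)) hq

lemma iter_mul_right {S : Set (ℝ × ℝ)} (hS : IsOpen S) {j : ℍ[ℝ]} {K G : ℝ × ℝ → ℍ[ℝ]} {M : ℕ}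
    (hK : ContDiffOn ℝ (M : ℕ∞) K S) (hc : ∀ q ∈ S, K q * j = j * K q)
    (hGd : ∀ q ∈ S, DifferentiableAt ℝ G q) (hG0 : ∀ q ∈ S, dbarL j G q = 0) :
    ∀ m, m ≤ M → ∀ p ∈ S, (dbarL j)^[m] (fun q => K q * G q) p = (dbarL j)^[m] K p * G p := by
  intro m
  induction m with
  | zero => intro _ p _; simp
  | succ m ih =>
    intro hm p hp
    rw [Function.iterate_succ_apply']
    rw [dbar_congr hS (ih (by omega)) hp j]
    rw [dbar_mul (iter_diff hS hK (by omega) p hp) (hGd p hp)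
      (iter_comm hS hK hc m (by omega) p hp), hG0 p hp, mul_zero, add_zero,
      Function.iterate_succ_apply' (dbarL j) m K]

lemma iter_mul_left {S : Set (ℝ × ℝ)} (hS : IsOpen S) {j : ℍ[ℝ]} {K G : ℝ × ℝ → ℍ[ℝ]} {M : ℕ}
    (hK : ContDiffOn ℝ (M : ℕ∞) K S)
    (hGd : ∀ q ∈ S, DifferentiableAt ℝ G q) (hG0 : ∀ q ∈ S, dbarL j G q = 0)
    (hGc : ∀ q ∈ S, G q * j = j * G q) :
    ∀ m, m ≤ M → ∀ p ∈ S, (dbarL j)^[m] (fun q => G q * K q) p = G p * (dbarL j)^[m] K p := by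
  intro m
  induction m with
  | zero => intro _ p _; simp
  | succ m ih =>
    intro hm p hp
    rw [Function.iterate_succ_apply']
    rw [dbar_congr hS (ih (by omega)) hp j]
    rw [dbar_mul_left (hGd p hp) (iter_diff hS hK (by omega) p hp) (hGc p hp),
      hG0 p hp, zero_mul, zero_add, Function.iterate_succ_apply' (dbarL j) m K]

/-- The CLM `(x, y) ↦ x + y * I`. -/
def mkC : (ℝ × ℝ) →L[ℝ] ℂ :=
  (ContinuousLinearMap.fst ℝ ℝ ℝ).smulRight (1 : ℂ) +
    (ContinuousLinearMap.snd ℝ ℝ ℝ).smulRight Complex.I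

@[simp] lemma mkC_re (q : ℝ × ℝ) : (mkC q).re = q.1 := by
  simp [mkC, Complex.real_smul]

@[simp] lemma mkC_im (q : ℝ × ℝ) : (mkC q).im = q.2 := by
  simp [mkC, Complex.real_smul]

lemma cr_smooth {S : Set (ℝ × ℝ)} (hS : IsOpen S) {a b : ℝ × ℝ → ℝ}
    (ha : ContDiffOn ℝ 1 a S) (hb : ContDiffOn ℝ 1 b S)
    (h1 : ∀ p ∈ S, fderiv ℝ a p (1, 0) = fderiv ℝ b p (0, 1))
    (h2 : ∀ p ∈ S, fderiv ℝ a p (0, 1) = -fderiv ℝ b p (1, 0)) (n : ℕ) :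
    ContDiffOn ℝ (n : ℕ∞) a S ∧ ContDiffOn ℝ (n : ℕ∞) b S := by
  have haD : ∀ p ∈ S, DifferentiableAt ℝ a p := fun p hp =>
    ((ha.differentiableOn one_ne_zero) p hp).differentiableAt (hS.mem_nhds hp)
  have hbD : ∀ p ∈ S, DifferentiableAt ℝ b p := fun p hp =>
    ((hb.differentiableOn one_ne_zero) p hp).differentiableAt (hS.mem_nhds hp)
  set T : Set ℂ := (fun z : ℂ => ((z.re, z.im) : ℝ × ℝ)) ⁻¹' S with hT
  have hTo : IsOpen T := hS.preimage (Complex.continuous_re.prodMk Complex.continuous_im)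
  set f : ℂ → ℂ := fun z => mkC (a (z.re, z.im), b (z.re, z.im)) with hfdef
  -- f is complex differentiable on T
  have hdiff : DifferentiableOn ℂ f T := by
    intro z hz
    have hzS : ((z.re, z.im) : ℝ × ℝ) ∈ S := hz
    set p : ℝ × ℝ := (z.re, z.im) with hp
    set A := fderiv ℝ a p with hA
    set B := fderiv ℝ b p with hB
    set ι : ℂ →L[ℝ] ℝ × ℝ := Complex.reCLM.prod Complex.imCLM with hι
    have hreal : HasFDerivAt f (mkC.comp ((A.prod B).comp ι)) z := by
      have hg : HasFDerivAt (fun q : ℝ × ℝ => (a q, b q)) (A.prod B) p :=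
        (haD p hzS).hasFDerivAt.prodMk (hbD p hzS).hasFDerivAt
      have hι' : HasFDerivAt (fun z : ℂ => ((z.re, z.im) : ℝ × ℝ)) ι z := ι.hasFDerivAt
      exact mkC.hasFDerivAt.comp z ((hg.comp z hι').congr_fderiv rfl)
    set d : ℂ := mkC (A (1, 0), B (1, 0)) with hd
    set C : ℂ →L[ℂ] ℂ := ContinuousLinearMap.smulRight (1 : ℂ →L[ℂ] ℂ) d with hC
    have hrestrict : C.restrictScalars ℝ = mkC.comp ((A.prod B).comp ι) := by
      apply ContinuousLinearMap.ext
      intro w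
      have hw : ((w.re, w.im) : ℝ × ℝ) = w.re • ((1, 0) : ℝ × ℝ) + w.im • ((0, 1) : ℝ × ℝ) := by
        simp [Prod.ext_iff]
      have hAw : A (w.re, w.im) = w.re * A (1, 0) - w.im * B (1, 0) := by
        rw [hw, map_add, map_smul, map_smul, h2 p hzS]
        simp [smul_eq_mul]; ring
      have hBw : B (w.re, w.im) = w.re * B (1, 0) + w.im * A (1, 0) := by
        rw [hw, map_add, map_smul, map_smul, ← h1 p hzS]
        simp [smul_eq_mul, ← hA]
      have hLHS : (C.restrictScalars ℝ) w = w * d := by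
        simp [hC, smul_eq_mul]
      have hRHS : (mkC.comp ((A.prod B).comp ι)) w = mkC (A (w.re, w.im), B (w.re, w.im)) := by
        rfl
      rw [hLHS, hRHS]
      apply Complex.ext
      · rw [Complex.mul_re, mkC_re, hAw]
        simp [hd]
      · rw [Complex.mul_im, mkC_im, hBw]
        simp [hd]
    exact (hasFDerivAt_of_restrictScalars ℝ hreal hrestrict).differentiableAt.differentiableWithinAt
  have hfC : ContDiffOn ℂ (n : ℕ∞) f T := hdiff.contDiffOn hTo
  have hfR : ContDiffOn ℝ (n : ℕ∞) f T := hfC.restrict_scalars ℝ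
  have hmaps : Set.MapsTo mkC S T := by
    intro q hq
    show ((((mkC q).re, (mkC q).im)) : ℝ × ℝ) ∈ S
    simpa using hq
  have hcomp : ContDiffOn ℝ (n : ℕ∞) (fun q => f (mkC q)) S :=
    hfR.comp (mkC.contDiff.contDiffOn) hmaps
  constructor
  · refine (Complex.reCLM.contDiff.comp_contDiffOn hcomp).congr ?_
    intro q hq
    show a q = (f (mkC q)).re
    simp [hfdef]
  · refine (Complex.imCLM.contDiff.comp_contDiffOn hcomp).congr ?_
    intro q hq
    show b q = (f (mkC q)).im
    simp [hfdef]

def qj : ℍ[ℝ] := ⟨0, 0, 1, 0⟩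
def qk : ℍ[ℝ] := ⟨0, 0, 0, 1⟩

lemma holo_smooth {S : Set (ℝ × ℝ)} (hS : IsOpen S) {G : ℝ × ℝ → ℍ[ℝ]}
    (hG : ContDiffOn ℝ 1 G S)
    (hol : ∀ p ∈ S, dbarL qi G p = 0) (n : ℕ) : ContDiffOn ℝ (n : ℕ∞) G S := by
  have hGd : ∀ p ∈ S, DifferentiableAt ℝ G p := fun p hp =>
    ((hG.differentiableOn one_ne_zero) p hp).differentiableAt (hS.mem_nhds hp)
  set a : ℝ × ℝ → ℝ := fun q => (G q).re with hadef
  set b : ℝ × ℝ → ℝ := fun q => (G q).imI with hbdef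
  set c : ℝ × ℝ → ℝ := fun q => (G q).imJ with hcdef
  set d : ℝ × ℝ → ℝ := fun q => (G q).imK with hddef
  have hca : ContDiffOn ℝ 1 a S := reCLM.contDiff.comp_contDiffOn hG
  have hcb : ContDiffOn ℝ 1 b S := imICLM.contDiff.comp_contDiffOn hG
  have hcc : ContDiffOn ℝ 1 c S := imJCLM.contDiff.comp_contDiffOn hG
  have hcd : ContDiffOn ℝ 1 d S := imKCLM.contDiff.comp_contDiffOn hG
  have hfa : ∀ p ∈ S, ∀ v, fderiv ℝ a p v = (fderiv ℝ G p v).re := by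
    intro p hp v
    have h : HasFDerivAt a (reCLM.comp (fderiv ℝ G p)) p :=
      reCLM.hasFDerivAt.comp p (hGd p hp).hasFDerivAt
    rw [h.fderiv]; rfl
  have hfb : ∀ p ∈ S, ∀ v, fderiv ℝ b p v = (fderiv ℝ G p v).imI := by
    intro p hp v
    have h : HasFDerivAt b (imICLM.comp (fderiv ℝ G p)) p :=
      imICLM.hasFDerivAt.comp p (hGd p hp).hasFDerivAt
    rw [h.fderiv]; rfl
  have hfc : ∀ p ∈ S, ∀ v, fderiv ℝ c p v = (fderiv ℝ G p v).imJ := by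
    intro p hp v
    have h : HasFDerivAt c (imJCLM.comp (fderiv ℝ G p)) p :=
      imJCLM.hasFDerivAt.comp p (hGd p hp).hasFDerivAt
    rw [h.fderiv]; rfl
  have hfd : ∀ p ∈ S, ∀ v, fderiv ℝ d p v = (fderiv ℝ G p v).imK := by
    intro p hp v
    have h : HasFDerivAt d (imKCLM.comp (fderiv ℝ G p)) p :=
      imKCLM.hasFDerivAt.comp p (hGd p hp).hasFDerivAt
    rw [h.fderiv]; rfl
  have key : ∀ p ∈ S, fderiv ℝ G p (1, 0) + qi * fderiv ℝ G p (0, 1) = 0 := by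
    intro p hp
    have h0 := hol p hp
    rw [dbarL] at h0
    rcases smul_eq_zero.mp h0 with h | h
    · norm_num at h
    · exact h
  have comp1 : ∀ p ∈ S,
      (fderiv ℝ G p (1, 0)).re = (fderiv ℝ G p (0, 1)).imI ∧
      (fderiv ℝ G p (1, 0)).imI = -(fderiv ℝ G p (0, 1)).re ∧
      (fderiv ℝ G p (1, 0)).imJ = (fderiv ℝ G p (0, 1)).imK ∧
      (fderiv ℝ G p (1, 0)).imK = -(fderiv ℝ G p (0, 1)).imJ := by
    intro p hp
    have h := key p hp
    rw [Quaternion.ext_iff] at h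
    simp only [Quaternion.re_add, Quaternion.imI_add, Quaternion.imJ_add, Quaternion.imK_add,
      Quaternion.re_mul, Quaternion.imI_mul, Quaternion.imJ_mul, Quaternion.imK_mul,
      qi_re, qi_imI, qi_imJ, qi_imK, Quaternion.re_zero, Quaternion.imI_zero,
      Quaternion.imJ_zero, Quaternion.imK_zero] at h
    obtain ⟨e1, e2, e3, e4⟩ := h
    refine ⟨by linarith, by linarith, by linarith, by linarith⟩
  have hab := cr_smooth hS hca hcb
    (fun p hp => by rw [hfa p hp, hfb p hp]; exact (comp1 p hp).1)
    (fun p hp => by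
      rw [hfa p hp, hfb p hp]
      have := (comp1 p hp).2.1
      linarith) n
  have hcd2 := cr_smooth hS hcc hcd
    (fun p hp => by rw [hfc p hp, hfd p hp]; exact (comp1 p hp).2.2.1)
    (fun p hp => by
      rw [hfc p hp, hfd p hp]
      have := (comp1 p hp).2.2.2
      linarith) n
  have hrec : ContDiffOn ℝ (n : ℕ∞)
      (fun q => a q • (1 : ℍ[ℝ]) + b q • qi + c q • qj + d q • qk) S :=
    (((hab.1.smul contDiffOn_const).add (hab.2.smul contDiffOn_const)).add
      (hcd2.1.smul contDiffOn_const)).add (hcd2.2.smul contDiffOn_const)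
  refine hrec.congr ?_
  intro q hq
  ext <;> simp [Quaternion.re_smul, Quaternion.imI_smul, Quaternion.imJ_smul, Quaternion.imK_smul,
      hadef, hbdef, hcdef, hddef] <;> simp [qi, qj, qk]

/-- The reflection `(u, v) ↦ (u, -v)`. -/
def refl2 : (ℝ × ℝ) →L[ℝ] (ℝ × ℝ) :=
  (ContinuousLinearMap.fst ℝ ℝ ℝ).prod (-(ContinuousLinearMap.snd ℝ ℝ ℝ))

@[simp] lemma refl2_apply (q : ℝ × ℝ) : refl2 q = (q.1, -q.2) := rfl

lemma antiholo_smooth {S : Set (ℝ × ℝ)} (hS : IsOpen S) {G : ℝ × ℝ → ℍ[ℝ]}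
    (hG : ContDiffOn ℝ 1 G S)
    (hol : ∀ p ∈ S, dbarL (-qi) G p = 0) (n : ℕ) : ContDiffOn ℝ (n : ℕ∞) G S := by
  have hGd : ∀ p ∈ S, DifferentiableAt ℝ G p := fun p hp =>
    ((hG.differentiableOn one_ne_zero) p hp).differentiableAt (hS.mem_nhds hp)
  set S' : Set (ℝ × ℝ) := refl2 ⁻¹' S with hS'def
  have hS'o : IsOpen S' := hS.preimage refl2.continuous
  have hmaps : Set.MapsTo refl2 S' S := fun q hq => hq
  have hmaps' : Set.MapsTo refl2 S S' := by
    intro q hq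
    show refl2 (refl2 q) ∈ S
    simpa using hq
  set K : ℝ × ℝ → ℍ[ℝ] := fun q => G (refl2 q) with hKdef
  have hKc : ContDiffOn ℝ 1 K S' := hG.comp refl2.contDiff.contDiffOn hmaps
  have hK0 : ∀ p ∈ S', dbarL qi K p = 0 := by
    intro p hp
    have hd : HasFDerivAt K ((fderiv ℝ G (refl2 p)).comp refl2) p :=
      (hGd (refl2 p) hp).hasFDerivAt.comp p refl2.hasFDerivAt
    have h := hol (refl2 p) hp
    rw [dbarL] at h ⊢
    rw [hd.fderiv]
    simp only [ContinuousLinearMap.coe_comp', Function.comp_apply, refl2_apply]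
    norm_num
    rw [show ((0 : ℝ), (-1 : ℝ)) = -((0 : ℝ), (1 : ℝ)) from by norm_num [Prod.ext_iff], map_neg]
    simpa [neg_mul, mul_neg, sub_eq_add_neg] using h
  have hKs : ContDiffOn ℝ (n : ℕ∞) K S' := holo_smooth hS'o hKc hK0 n
  have : ContDiffOn ℝ (n : ℕ∞) (fun q => K (refl2 q)) S :=
    hKs.comp refl2.contDiff.contDiffOn hmaps'
  refine this.congr ?_
  intro q hq
  show G q = G (refl2 (refl2 q))
  simp

lemma comps_smooth {S : Set (ℝ × ℝ)} (hS : IsOpen S) {g₀ g₁ : ℝ × ℝ → ℍ[ℝ]}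
    (hc₀ : ContDiffOn ℝ 1 g₀ S) (hc₁ : ContDiffOn ℝ 1 g₁ S)
    (hol : ∀ j ∈ Sph, ∀ p ∈ S, dbarL j (fun q => g₀ q + j * g₁ q) p = 0) (n : ℕ) :
    ContDiffOn ℝ (n : ℕ∞) g₀ S ∧ ContDiffOn ℝ (n : ℕ∞) g₁ S := by
  have hH : ContDiffOn ℝ (n : ℕ∞) (fun q => g₀ q + qi * g₁ q) S :=
    holo_smooth hS (hc₀.add (contDiffOn_const.mul hc₁)) (hol qi qi_mem) n
  have hH' : ContDiffOn ℝ (n : ℕ∞) (fun q => g₀ q + -qi * g₁ q) S :=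
    antiholo_smooth hS (hc₀.add (contDiffOn_const.mul hc₁))
      (hol (-qi) (neg_mem_Sph qi_mem)) n
  have hqq : qi * qi = -1 := sph_mul_self qi_mem
  constructor
  · refine (((hH.add hH').const_smul ((2:ℝ)⁻¹)).congr ?_)
    intro q hq
    have h : g₀ q + qi * g₁ q + (g₀ q + -qi * g₁ q) = (2 : ℝ) • g₀ q := by
      rw [neg_mul, two_smul]; abel
    rw [h, smul_smul]; norm_num
  · have hsm : ContDiffOn ℝ (n : ℕ∞)
        (fun q => (2:ℝ)⁻¹ • (qi * (g₀ q + -qi * g₁ q - (g₀ q + qi * g₁ q)))) S :=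
      ((contDiffOn_const (c := qi)).mul (hH'.sub hH)).const_smul ((2:ℝ)⁻¹)
    refine hsm.congr ?_
    intro q hq
    have h1 : g₀ q + -qi * g₁ q - (g₀ q + qi * g₁ q) = -(qi * g₁ q) - qi * g₁ q := by
      rw [neg_mul]; abel
    have h2 : qi * (g₀ q + -qi * g₁ q - (g₀ q + qi * g₁ q)) = (2 : ℝ) • g₁ q := by
      rw [h1, mul_sub, mul_neg, ← mul_assoc, hqq, neg_one_mul, neg_neg, two_smul, sub_neg_eq_add]
    rw [h2, smul_smul]; norm_num

lemma prod_expand {j a b c d : ℍ[ℝ]} (hjj : j * j = -1) (ha : a.im = 0) (hb : b.im = 0) :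
    (a + j * b) * (c + j * d) = (a * c - b * d) + j * (a * d + b * c) := by
  have ca : a * j = j * a := (real_commute ha j).eq
  have cb : b * j = j * b := (real_commute hb j).eq
  have h1 : a * (j * d) = j * (a * d) := by rw [← mul_assoc, ca, mul_assoc]
  have h2 : (j * b) * (j * d) = -(b * d) := by
    rw [mul_assoc j b (j * d), ← mul_assoc b j d, cb, ← mul_assoc j (j * b) d,
      ← mul_assoc j j b, hjj, neg_one_mul, neg_mul]
  rw [add_mul, mul_add, mul_add, h1, h2, mul_assoc j b c, mul_add j (a * d) (b * c)]
  abel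

lemma slice_comm {j x y : ℍ[ℝ]} (hx : x.im = 0) (hy : y.im = 0) :
    (x + j * y) * j = j * (x + j * y) := by
  rw [add_mul, mul_add, (real_commute hx j).eq, mul_assoc, (real_commute hy j).eq]

lemma core_polyCompL {U : Set ℍ[ℝ]} (hax : AxiallySymmetric U) (hop : IsOpen U) {M : ℕ}
    {F₀ F₁ g₀ g₁ : ℝ × ℝ → ℍ[ℝ]}
    (hF : PolyCompL U M F₀ F₁) (hF₀r : ∀ p, (F₀ p).im = 0) (hF₁r : ∀ p, (F₁ p).im = 0)
    (hg : PolyCompL U 1 g₀ g₁) :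
    PolyCompL U M (fun q => F₀ q * g₀ q - F₁ q * g₁ q)
      (fun q => F₀ q * g₁ q + F₁ q * g₀ q) := by
  have hS := slicePlane_isOpen hax hop
  have hg1 : ContDiffOn ℝ 1 g₀ (slicePlane U) := by simpa using hg.1
  have hg2 : ContDiffOn ℝ 1 g₁ (slicePlane U) := by simpa using hg.2.1
  have hol : ∀ j ∈ Sph, ∀ p ∈ slicePlane U, dbarL j (fun q => g₀ q + j * g₁ q) p = 0 := by
    intro j hj p hp
    have := hg.2.2 j hj p hp
    simpa using this
  obtain ⟨hg₀M, hg₁M⟩ := comps_smooth hS hg1 hg2 hol M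
  refine ⟨(hF.1.mul hg₀M).sub (hF.2.1.mul hg₁M), (hF.1.mul hg₁M).add (hF.2.1.mul hg₀M), ?_⟩
  intro j hj p hp
  have hfun : (fun q => (F₀ q * g₀ q - F₁ q * g₁ q) + j * (F₀ q * g₁ q + F₁ q * g₀ q))
      = fun q => (F₀ q + j * F₁ q) * (g₀ q + j * g₁ q) :=
    funext fun q => (prod_expand (sph_mul_self hj) (hF₀r q) (hF₁r q)).symm
  rw [hfun]
  have hKreg : ContDiffOn ℝ (M : ℕ∞) (fun q => F₀ q + j * F₁ q) (slicePlane U) :=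
    hF.1.add (contDiffOn_const.mul hF.2.1)
  have hKc : ∀ q ∈ slicePlane U, (F₀ q + j * F₁ q) * j = j * (F₀ q + j * F₁ q) :=
    fun q _ => slice_comm (hF₀r q) (hF₁r q)
  have hGd : ∀ q ∈ slicePlane U, DifferentiableAt ℝ (fun r => g₀ r + j * g₁ r) q := by
    intro q hq
    exact (((hg1.add (contDiffOn_const.mul hg2)).differentiableOn one_ne_zero) q hq).differentiableAt
      (hS.mem_nhds hq)
  rw [iter_mul_right hS hKreg hKc hGd (hol j hj) M le_rfl p hp, hF.2.2 j hj p hp, zero_mul]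

lemma core_polyCompL_left {U : Set ℍ[ℝ]} (hax : AxiallySymmetric U) (hop : IsOpen U) {M : ℕ}
    {F₀ F₁ g₀ g₁ : ℝ × ℝ → ℍ[ℝ]}
    (hF : PolyCompL U M F₀ F₁)
    (hg : PolyCompL U 1 g₀ g₁) (hg₀r : ∀ p, (g₀ p).im = 0) (hg₁r : ∀ p, (g₁ p).im = 0) :
    PolyCompL U M (fun q => g₀ q * F₀ q - g₁ q * F₁ q)
      (fun q => g₀ q * F₁ q + g₁ q * F₀ q) := by
  have hS := slicePlane_isOpen hax hop
  have hg1 : ContDiffOn ℝ 1 g₀ (slicePlane U) := by simpa using hg.1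
  have hg2 : ContDiffOn ℝ 1 g₁ (slicePlane U) := by simpa using hg.2.1
  have hol : ∀ j ∈ Sph, ∀ p ∈ slicePlane U, dbarL j (fun q => g₀ q + j * g₁ q) p = 0 := by
    intro j hj p hp
    have := hg.2.2 j hj p hp
    simpa using this
  obtain ⟨hg₀M, hg₁M⟩ := comps_smooth hS hg1 hg2 hol M
  refine ⟨(hg₀M.mul hF.1).sub (hg₁M.mul hF.2.1), (hg₀M.mul hF.2.1).add (hg₁M.mul hF.1), ?_⟩
  intro j hj p hp
  have hfun : (fun q => (g₀ q * F₀ q - g₁ q * F₁ q) + j * (g₀ q * F₁ q + g₁ q * F₀ q))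
      = fun q => (g₀ q + j * g₁ q) * (F₀ q + j * F₁ q) :=
    funext fun q => (prod_expand (sph_mul_self hj) (hg₀r q) (hg₁r q)).symm
  rw [hfun]
  have hKreg : ContDiffOn ℝ (M : ℕ∞) (fun q => F₀ q + j * F₁ q) (slicePlane U) :=
    hF.1.add (contDiffOn_const.mul hF.2.1)
  have hGc : ∀ q ∈ slicePlane U, (g₀ q + j * g₁ q) * j = j * (g₀ q + j * g₁ q) :=
    fun q _ => slice_comm (hg₀r q) (hg₁r q)
  have hGd : ∀ q ∈ slicePlane U, DifferentiableAt ℝ (fun r => g₀ r + j * g₁ r) q := by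
    intro q hq
    exact (((hg1.add (contDiffOn_const.mul hg2)).differentiableOn one_ne_zero) q hq).differentiableAt
      (hS.mem_nhds hq)
  rw [iter_mul_left hS hKreg hGd (hol j hj) hGc M le_rfl p hp, hF.2.2 j hj p hp, mul_zero]

end SliceAux

open SliceAux in
/-- Products preserving poly slice monogenicity. -/
theorem statement6 (U : Set ℍ[ℝ]) (hax : AxiallySymmetric U) (hop : IsOpen U)
    (M : ℕ) (hM : 1 ≤ M) :
    (∀ F g : ℍ[ℝ] → ℍ[ℝ], PolySliceMonN U M F → PolySliceMonL U 1 g →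
      PolySliceMonL U M (fun x => F x * g x)) ∧
    (∀ F g : ℍ[ℝ] → ℍ[ℝ], PolySliceMonL U M F → PolySliceMonN U 1 g →
      PolySliceMonL U M (fun x => g x * F x)) ∧
    (∀ F g : ℍ[ℝ] → ℍ[ℝ], PolySliceMonN U M F → PolySliceMonN U 1 g →
      (∀ x ∈ U, F x * g x = g x * F x) ∧
      PolySliceMonN U M (fun x => F x * g x)) := by
  refine ⟨?_, ?_, ?_⟩
  · rintro F g ⟨F₀, F₁, hF₀r, hF₁r, hFs, hFc⟩ ⟨g₀, g₁, hgs, hgc⟩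
    refine ⟨fun q => F₀ q * g₀ q - F₁ q * g₁ q, fun q => F₀ q * g₁ q + F₁ q * g₀ q, ?_,
      core_polyCompL hax hop hFc hF₀r hF₁r hgc⟩
    intro p hp j hj
    show F ((p.1 : ℍ[ℝ]) + p.2 • j) * g ((p.1 : ℍ[ℝ]) + p.2 • j) = _
    rw [hFs p hp j hj, hgs p hp j hj, prod_expand (sph_mul_self hj) (hF₀r p) (hF₁r p)]
  · rintro F g ⟨F₀, F₁, hFs, hFc⟩ ⟨g₀, g₁, hg₀r, hg₁r, hgs, hgc⟩
    refine ⟨fun q => g₀ q * F₀ q - g₁ q * F₁ q, fun q => g₀ q * F₁ q + g₁ q * F₀ q, ?_,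
      core_polyCompL_left hax hop hFc hgc hg₀r hg₁r⟩
    intro p hp j hj
    show g ((p.1 : ℍ[ℝ]) + p.2 • j) * F ((p.1 : ℍ[ℝ]) + p.2 • j) = _
    rw [hgs p hp j hj, hFs p hp j hj, prod_expand (sph_mul_self hj) (hg₀r p) (hg₁r p)]
  · rintro F g ⟨F₀, F₁, hF₀r, hF₁r, hFs, hFc⟩ ⟨g₀, g₁, hg₀r, hg₁r, hgs, hgc⟩
    constructor
    · intro x hx
      obtain ⟨j, hj, hxeq, hp⟩ := exists_repr hax hx
      set pp : ℝ × ℝ := (x.re, ‖x.im‖) with hpp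
      have hF' : F x = F₀ pp + j * F₁ pp := by
        rw [hxeq]; exact hFs pp hp j hj
      have hg' : g x = g₀ pp + j * g₁ pp := by
        rw [hxeq]; exact hgs pp hp j hj
      rw [hF', hg', prod_expand (sph_mul_self hj) (hF₀r pp) (hF₁r pp),
        prod_expand (sph_mul_self hj) (hg₀r pp) (hg₁r pp),
        (real_commute (hg₀r pp) (F₀ pp)).eq, (real_commute (hg₁r pp) (F₁ pp)).eq,
        (real_commute (hg₀r pp) (F₁ pp)).eq, (real_commute (hg₁r pp) (F₀ pp)).eq,
        add_comm (F₁ pp * g₀ pp) (F₀ pp * g₁ pp)]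
    · refine ⟨fun q => F₀ q * g₀ q - F₁ q * g₁ q, fun q => F₀ q * g₁ q + F₁ q * g₀ q,
        ?_, ?_, ?_, core_polyCompL hax hop hFc hF₀r hF₁r hgc⟩
      · intro p
        simp [Quaternion.im_sub, mul_im_zero (hF₀r p) (hg₀r p), mul_im_zero (hF₁r p) (hg₁r p)]
      · intro p
        simp [Quaternion.im_add, mul_im_zero (hF₀r p) (hg₁r p), mul_im_zero (hF₁r p) (hg₀r p)]
      · intro p hp j hj
        show F ((p.1 : ℍ[ℝ]) + p.2 • j) * g ((p.1 : ℍ[ℝ]) + p.2 • j) = _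
        rw [hFs p hp j hj, hgs p hp j hj, prod_expand (sph_mul_self hj) (hF₀r p) (hF₁r p)]
end
end

section
/- Poly slice monogenicity of the kernels P_ℓ. Let ℓ ∈ ℕ. For every fixed s ∈ ℍ, the function x ↦ P_ℓS_L⁻¹(s,x) is left poly slice monogenic of order ℓ+1 on the axially symmetric open set ℍ ∖ [s], and for every fixed x ∈ ℍ the function s ↦ P_ℓS_L⁻¹(s,x) is right poly slice monogenic of order ℓ+1 on ℍ ∖ [x]. Likewise, x ↦ P_ℓS_R⁻¹(s,x) is right poly slice monogenic of order ℓ+1 on ℍ ∖ [s], and s ↦ P_ℓS_R⁻¹(s,x) is left poly slice monogenic of order ℓ+1 on ℍ ∖ [x]. -/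
noncomputable section

open scoped Quaternion
open Finset

namespace Helper

noncomputable def jj : ℍ[ℝ] := ⟨0,1,0,0⟩

lemma jj_mem : jj ∈ Sph := by
  refine ⟨rfl, ?_⟩
  have h : ‖jj‖ * ‖jj‖ = 1 := by
    rw [← Quaternion.normSq_eq_norm_mul_self]
    rw [Quaternion.normSq_def']; simp [jj]
  nlinarith [norm_nonneg jj]

lemma im_self_of_re_zero {j : ℍ[ℝ]} (h : j.re = 0) : j.im = j := by
  conv_rhs => rw [← Quaternion.re_add_im j]
  simp [h]

lemma mem_assoc_iff {s x : ℍ[ℝ]} : x ∈ assocSphere s ↔ x.re = s.re ∧ ‖x.im‖ = ‖s.im‖ := by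
  constructor
  · rintro ⟨j, ⟨hre, hn⟩, rfl⟩
    constructor
    · simp [hre]
    · rw [Quaternion.im_add, Quaternion.im_coe, Quaternion.im_smul, im_self_of_re_zero hre,
        zero_add, norm_smul, hn, Real.norm_eq_abs, abs_of_nonneg (norm_nonneg _), mul_one]
  · rintro ⟨h1, h2⟩
    by_cases him : x.im = 0
    · refine ⟨jj, jj_mem, ?_⟩
      have : ‖s.im‖ = 0 := by rw [← h2, him, norm_zero]
      have hx : x = (x.re : ℍ[ℝ]) := by
        conv_lhs => rw [← Quaternion.re_add_im x]
        rw [him, add_zero]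
      rw [this, zero_smul, add_zero, ← h1]
      exact hx
    · refine ⟨‖x.im‖⁻¹ • x.im, ⟨by simp, ?_⟩, ?_⟩
      · rw [norm_smul, Real.norm_eq_abs, abs_inv, abs_of_nonneg (norm_nonneg _),
          inv_mul_cancel₀ (norm_ne_zero_iff.mpr him)]
      · rw [← h2, smul_smul, mul_inv_cancel₀ (norm_ne_zero_iff.mpr him), one_smul, ← h1,
          Quaternion.re_add_im]

lemma isOpen_compl_assoc (s : ℍ[ℝ]) : IsOpen (assocSphere s)ᶜ := by
  rw [isOpen_compl_iff]
  have : assocSphere s = {y : ℍ[ℝ] | y.re = s.re} ∩ {y : ℍ[ℝ] | ‖y.im‖ = ‖s.im‖} :=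
    Set.ext fun x => by simpa using mem_assoc_iff
  rw [this]
  exact (isClosed_eq Quaternion.continuous_re continuous_const).inter
    (isClosed_eq Quaternion.continuous_im.norm continuous_const)

lemma axSymm_compl_assoc (s : ℍ[ℝ]) : AxiallySymmetric (assocSphere s)ᶜ := by
  intro x hx y hy hmem
  rcases mem_assoc_iff.mp hy with ⟨h1, h2⟩
  rcases mem_assoc_iff.mp hmem with ⟨h3, h4⟩
  exact hx (mem_assoc_iff.mpr ⟨h1.symm ▸ h3, h2.symm ▸ h4⟩)



noncomputable def ιL : ℝ × ℝ →L[ℝ] ℂ :=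
  Complex.ofRealCLM.comp (ContinuousLinearMap.fst ℝ ℝ ℝ) +
    (ContinuousLinearMap.snd ℝ ℝ ℝ).smulRight Complex.I

lemma ιL_re (p : ℝ × ℝ) : (ιL p).re = p.1 := by simp [ιL]
lemma ιL_im (p : ℝ × ℝ) : (ιL p).im = p.2 := by simp [ιL]
lemma ιL_apply (p : ℝ × ℝ) : ιL p = Complex.mk p.1 p.2 := by
  apply Complex.ext
  · exact ιL_re p
  · exact ιL_im p

noncomputable def PsiL (j : ℍ[ℝ]) : ℂ →L[ℝ] ℍ[ℝ] :=
  Complex.reCLM.smulRight 1 + Complex.imCLM.smulRight j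

lemma PsiL_apply (j : ℍ[ℝ]) (z : ℂ) : PsiL j z = (z.re : ℍ[ℝ]) + z.im • j := by
  simp [PsiL]
  rw [← Quaternion.algebraMap_def, Algebra.algebraMap_eq_smul_one]

lemma PsiL_re {j : ℍ[ℝ]} (hj : j ∈ Sph) (z : ℂ) : (PsiL j z).re = z.re := by
  rw [PsiL_apply]
  simp [hj.1]

lemma PsiL_real (j : ℍ[ℝ]) (r : ℝ) : PsiL j (r : ℂ) = (r : ℍ[ℝ]) := by
  simp [PsiL_apply]

lemma PsiL_I (j : ℍ[ℝ]) : PsiL j Complex.I = j := by simp [PsiL_apply]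

lemma jsq {j : ℍ[ℝ]} (hj : j ∈ Sph) : j * j = -1 := by
  have h1 : star j = -j := by
    rw [Quaternion.star_eq_two_re_sub, hj.1]
    simp
  have h2 : j * star j = ((Quaternion.normSq j : ℝ) : ℍ[ℝ]) := Quaternion.self_mul_star j
  rw [h1, mul_neg] at h2
  have h3 : Quaternion.normSq j = 1 := by
    rw [Quaternion.normSq_eq_norm_mul_self, hj.2, one_mul]
  rw [h3] at h2
  have := neg_eq_iff_eq_neg.mp h2
  simpa using this

lemma PsiL_eq_lift {j : ℍ[ℝ]} (hj : j ∈ Sph) (z : ℂ) :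
    PsiL j z = Complex.liftAux j (jsq hj) z := by
  rw [Complex.liftAux_apply, PsiL_apply, Quaternion.algebraMap_def]

lemma PsiL_mul {j : ℍ[ℝ]} (hj : j ∈ Sph) (z w : ℂ) :
    PsiL j (z * w) = PsiL j z * PsiL j w := by
  rw [PsiL_eq_lift hj, PsiL_eq_lift hj, PsiL_eq_lift hj, map_mul]

lemma PsiL_inv {j : ℍ[ℝ]} (hj : j ∈ Sph) (z : ℂ) :
    PsiL j z⁻¹ = (PsiL j z)⁻¹ := by
  rw [PsiL_eq_lift hj, PsiL_eq_lift hj, map_inv₀]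

lemma PsiL_inj {j : ℍ[ℝ]} (hj : j ∈ Sph) : Function.Injective (PsiL j) := by
  intro z w h
  rw [PsiL_eq_lift hj, PsiL_eq_lift hj] at h
  exact RingHom.injective (Complex.liftAux j (jsq hj)).toRingHom h

lemma norm_sq_decomp (t : ℍ[ℝ]) : ‖t‖^2 = t.re^2 + ‖t.im‖^2 := by
  have a1 : ‖t‖^2 = Quaternion.normSq t := by
    rw [Quaternion.normSq_eq_norm_mul_self, sq]
  have a2 : ‖t.im‖^2 = Quaternion.normSq t.im := by
    rw [Quaternion.normSq_eq_norm_mul_self, sq]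
  rw [a1, a2, Quaternion.normSq_def', Quaternion.normSq_def']
  simp only [Quaternion.re_im, Quaternion.imI_im, Quaternion.imJ_im, Quaternion.imK_im]
  ring

set_option maxHeartbeats 2000000 in
lemma key_id (s x : ℍ[ℝ]) : Qker s x * (s - star x) = -((x - star s) * Qker x s) := by
  have hs : ((‖s‖^2:ℝ):ℍ[ℝ]) = ((s.re^2 + s.imI^2 + s.imJ^2 + s.imK^2 : ℝ):ℍ[ℝ]) := by
    rw [sq, ← Quaternion.normSq_eq_norm_mul_self, Quaternion.normSq_def']
  have hx : ((‖x‖^2:ℝ):ℍ[ℝ]) = ((x.re^2 + x.imI^2 + x.imJ^2 + x.imK^2 : ℝ):ℍ[ℝ]) := by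
    rw [sq, ← Quaternion.normSq_eq_norm_mul_self, Quaternion.normSq_def']
  unfold Qker
  rw [hs, hx, ← Quaternion.self_add_star s, ← Quaternion.self_add_star x]
  ext <;>
    simp only [pow_two, Quaternion.re_mul, Quaternion.imI_mul, Quaternion.imJ_mul,
      Quaternion.imK_mul,
      Quaternion.re_add, Quaternion.imI_add, Quaternion.imJ_add, Quaternion.imK_add,
      Quaternion.re_sub, Quaternion.imI_sub, Quaternion.imJ_sub, Quaternion.imK_sub,
      Quaternion.re_neg, Quaternion.imI_neg, Quaternion.imJ_neg, Quaternion.imK_neg,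
      Quaternion.re_star, Quaternion.imI_star, Quaternion.imJ_star, Quaternion.imK_star,
      Quaternion.re_coe, Quaternion.imI_coe, Quaternion.imJ_coe, Quaternion.imK_coe] <;>
    ring

lemma formII_L (s x : ℍ[ℝ]) (h1 : Qker s x ≠ 0) (h2 : Qker x s ≠ 0) :
    -((Qker s x)⁻¹ * (x - star s)) = (s - star x) * (Qker x s)⁻¹ := by
  have e1 : Qker s x * -((Qker s x)⁻¹ * (x - star s)) * Qker x s
      = Qker s x * ((s - star x) * (Qker x s)⁻¹) * Qker x s := by
    rw [mul_neg, mul_inv_cancel_left₀ h1, neg_mul, ← key_id s x,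
      mul_assoc, mul_assoc, inv_mul_cancel₀ h2, mul_one]
  exact mul_left_cancel₀ h1 (mul_right_cancel₀ h2 e1)

lemma formII_R (s x : ℍ[ℝ]) (h1 : Qker s x ≠ 0) (h2 : Qker x s ≠ 0) :
    -((x - star s) * (Qker s x)⁻¹) = (Qker x s)⁻¹ * (s - star x) := by
  have e1 : Qker x s * -((x - star s) * (Qker s x)⁻¹) * Qker s x
      = Qker x s * ((Qker x s)⁻¹ * (s - star x)) * Qker s x := by
    rw [mul_neg, ← mul_assoc (Qker x s) (x - star s) (Qker s x)⁻¹, neg_mul,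
      mul_assoc (Qker x s * (x - star s)), inv_mul_cancel₀ h1, mul_one, key_id x s, neg_neg,
      mul_inv_cancel_left₀ h2]
  exact mul_left_cancel₀ h2 (mul_right_cancel₀ h1 e1)



def qp (t : ℍ[ℝ]) (w : ℂ) : ℂ := w^2 - 2*(t.re:ℂ)*w + ((‖t‖^2 : ℝ):ℂ)

lemma coe_two_mul (r : ℝ) : ((2*r : ℝ):ℍ[ℝ]) = 2 * (r:ℍ[ℝ]) := by
  rw [two_mul, two_mul, Quaternion.coe_add]

lemma PsiL_Qker {j : ℍ[ℝ]} (hj : j ∈ Sph) (t : ℍ[ℝ]) (w : ℂ) :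
    Qker t (PsiL j w) = PsiL j (qp t w) := by
  have h2 : (2*(t.re:ℂ)*w) = ((2*t.re : ℝ):ℂ) * w := by push_cast; ring
  unfold Qker qp
  rw [h2, map_add, map_sub, pow_two (PsiL j w), pow_two w, PsiL_mul hj, PsiL_mul hj, PsiL_real, PsiL_real, coe_two_mul]

lemma qker_ne_zero {t x : ℍ[ℝ]} (hx : x ∉ assocSphere t) : Qker t x ≠ 0 := by
  obtain ⟨j, hjS, hxe⟩ := mem_assoc_iff.mpr (⟨rfl, rfl⟩ : x.re = x.re ∧ ‖x.im‖ = ‖x.im‖)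
  have hxw : x = PsiL j (Complex.mk x.re ‖x.im‖) := by rw [PsiL_apply]; exact hxe
  intro h0
  rw [hxw, PsiL_Qker hjS] at h0
  have hq : qp t (Complex.mk x.re ‖x.im‖) = 0 := by
    apply PsiL_inj hjS
    rw [h0, map_zero]
  have hre := congrArg Complex.re hq
  have him := congrArg Complex.im hq
  simp only [qp, Complex.sub_re, Complex.add_re, Complex.mul_re, Complex.mul_im,
    Complex.sub_im, Complex.add_im, Complex.ofReal_re, Complex.ofReal_im, sq,
    Complex.zero_re, Complex.zero_im, Complex.re_ofNat, Complex.im_ofNat] at hre him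
  have hd := norm_sq_decomp t
  apply hx
  apply mem_assoc_iff.mpr
  have hvtt : ‖x.im‖ * (x.re - t.re) = 0 := by nlinarith [him]
  rcases mul_eq_zero.mp hvtt with hv | hu
  · constructor
    · nlinarith [sq_nonneg (x.re - t.re), sq_nonneg ‖t.im‖, hre, hd, hv]
    · have ht : ‖t.im‖ = 0 := by
        nlinarith [sq_nonneg (x.re - t.re), sq_nonneg ‖t.im‖, hre, hd, hv]
      rw [ht, hv]
  · have hxt : x.re = t.re := by linarith
    refine ⟨hxt, ?_⟩
    nlinarith [hre, hd, hxt, norm_nonneg x.im, norm_nonneg t.im]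

lemma psil_iota (j : ℍ[ℝ]) (p : ℝ × ℝ) :
    PsiL j (ιL p) = ((p.1:ℝ) : ℍ[ℝ]) + p.2 • j := by
  rw [PsiL_apply, ιL_apply]

lemma assoc_symm {t x : ℍ[ℝ]} : x ∈ assocSphere t ↔ t ∈ assocSphere x := by
  rw [mem_assoc_iff, mem_assoc_iff, eq_comm (a := x.re), eq_comm (a := ‖x.im‖)]


-- ============ calculus ============

lemma dbarL_congr {V : Set (ℝ × ℝ)} (hV : IsOpen V) (j : ℍ[ℝ]) {f g : ℝ × ℝ → ℍ[ℝ]}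
    (h : ∀ q ∈ V, f q = g q) {p : ℝ × ℝ} (hp : p ∈ V) : dbarL j f p = dbarL j g p := by
  unfold dbarL
  rw [Filter.EventuallyEq.fderiv_eq (Filter.eventuallyEq_of_mem (hV.mem_nhds hp) h)]

lemma dbarR_congr {V : Set (ℝ × ℝ)} (hV : IsOpen V) (j : ℍ[ℝ]) {f g : ℝ × ℝ → ℍ[ℝ]}
    (h : ∀ q ∈ V, f q = g q) {p : ℝ × ℝ} (hp : p ∈ V) : dbarR j f p = dbarR j g p := by
  unfold dbarR
  rw [Filter.EventuallyEq.fderiv_eq (Filter.eventuallyEq_of_mem (hV.mem_nhds hp) h)]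

lemma dbarL_iter_congr {V : Set (ℝ × ℝ)} (hV : IsOpen V) (j : ℍ[ℝ]) (n : ℕ) :
    ∀ {f g : ℝ × ℝ → ℍ[ℝ]}, (∀ q ∈ V, f q = g q) → ∀ p ∈ V,
      (dbarL j)^[n] f p = (dbarL j)^[n] g p := by
  induction n with
  | zero => intro f g h p hp; simpa using h p hp
  | succ n ih =>
    intro f g h p hp
    rw [Function.iterate_succ_apply, Function.iterate_succ_apply]
    exact ih (fun q hq => dbarL_congr hV j h hq) p hp

lemma dbarR_iter_congr {V : Set (ℝ × ℝ)} (hV : IsOpen V) (j : ℍ[ℝ]) (n : ℕ) :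
    ∀ {f g : ℝ × ℝ → ℍ[ℝ]}, (∀ q ∈ V, f q = g q) → ∀ p ∈ V,
      (dbarR j)^[n] f p = (dbarR j)^[n] g p := by
  induction n with
  | zero => intro f g h p hp; simpa using h p hp
  | succ n ih =>
    intro f g h p hp
    rw [Function.iterate_succ_apply, Function.iterate_succ_apply]
    exact ih (fun q hq => dbarR_congr hV j h hq) p hp

def DC (d : ℂ) : ℂ →L[ℝ] ℂ := ((1 : ℂ →L[ℂ] ℂ).smulRight d).restrictScalars ℝ

lemma DC_apply (d z : ℂ) : DC d z = z * d := by
  simp [DC, smul_eq_mul]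

lemma iotaL_10 : ιL ((1:ℝ), (0:ℝ)) = 1 := by
  rw [ιL_apply]; apply Complex.ext <;> simp

lemma iotaL_01 : ιL ((0:ℝ), (1:ℝ)) = Complex.I := by
  rw [ιL_apply]; apply Complex.ext <;> simp

-- multiplication CLMs
def mulRCLM (b : ℍ[ℝ]) : ℍ[ℝ] →L[ℝ] ℍ[ℝ] := (LinearMap.mulRight ℝ b).toContinuousLinearMap
def mulLCLM (c : ℍ[ℝ]) : ℍ[ℝ] →L[ℝ] ℍ[ℝ] := (LinearMap.mulLeft ℝ c).toContinuousLinearMap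

lemma mulRCLM_apply (b y : ℍ[ℝ]) : mulRCLM b y = y * b := by
  simp [mulRCLM]

lemma mulLCLM_apply (c y : ℍ[ℝ]) : mulLCLM c y = c * y := by
  simp [mulLCLM]

-- block with constant on the right
def BR (j b : ℍ[ℝ]) (d : ℂ) : (ℝ × ℝ) →L[ℝ] ℍ[ℝ] :=
  (((mulRCLM b).comp (PsiL j)).comp ((DC d).comp ιL))

lemma BR_apply (j b : ℍ[ℝ]) (d : ℂ) (v : ℝ × ℝ) : BR j b d v = PsiL j (ιL v * d) * b := by
  simp [BR, DC_apply, mulRCLM_apply]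

def BL (j c : ℍ[ℝ]) (d : ℂ) : (ℝ × ℝ) →L[ℝ] ℍ[ℝ] :=
  (((mulLCLM c).comp (PsiL j)).comp ((DC d).comp ιL))

lemma BL_apply (j c : ℍ[ℝ]) (d : ℂ) (v : ℝ × ℝ) : BL j c d v = c * PsiL j (ιL v * d) := by
  simp [BL, DC_apply, mulLCLM_apply]

lemma blockR_hasFDerivAt (j b : ℍ[ℝ]) {g : ℂ → ℂ} {p : ℝ × ℝ}
    (hg : DifferentiableAt ℂ g (ιL p)) :
    HasFDerivAt (fun q => PsiL j (g (ιL q)) * b) (BR j b (deriv g (ιL p))) p := by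
  have h1 : HasFDerivAt (fun q : ℝ × ℝ => ιL q) (ιL : (ℝ×ℝ) →L[ℝ] ℂ) p := ιL.hasFDerivAt
  have h2 : HasFDerivAt g (DC (deriv g (ιL p))) (ιL p) :=
    (hg.hasDerivAt.hasFDerivAt).restrictScalars ℝ
  have h3 := h2.comp p h1
  exact (((mulRCLM b).comp (PsiL j)).hasFDerivAt).comp p h3

lemma blockL_hasFDerivAt (j c : ℍ[ℝ]) {g : ℂ → ℂ} {p : ℝ × ℝ}
    (hg : DifferentiableAt ℂ g (ιL p)) :
    HasFDerivAt (fun q => c * PsiL j (g (ιL q))) (BL j c (deriv g (ιL p))) p := by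
  have h1 : HasFDerivAt (fun q : ℝ × ℝ => ιL q) (ιL : (ℝ×ℝ) →L[ℝ] ℂ) p := ιL.hasFDerivAt
  have h2 : HasFDerivAt g (DC (deriv g (ιL p))) (ιL p) :=
    (hg.hasDerivAt.hasFDerivAt).restrictScalars ℝ
  have h3 := h2.comp p h1
  exact (((mulLCLM c).comp (PsiL j)).hasFDerivAt).comp p h3

def PD (ε a : ℝ) (n : ℕ) : ℝ × ℝ → ℝ := fun q => (ε*q.1+a)^n / n.factorial

lemma PD_hasFDerivAt (ε a : ℝ) (n : ℕ) (p : ℝ × ℝ) :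
    HasFDerivAt (PD ε a n)
      ((((n:ℝ) * (ε*p.1+a)^(n-1) * ε) / n.factorial) • ContinuousLinearMap.fst ℝ ℝ ℝ) p := by
  have h0 : HasDerivAt (fun u : ℝ => ε*u+a) ε p.1 := by
    simpa using ((hasDerivAt_id p.1).const_mul ε).add_const a
  have hpow := (h0.pow n).div_const (n.factorial : ℝ)
  exact hpow.comp_hasFDerivAt p hasFDerivAt_fst

lemma dbar_algL {j : ℍ[ℝ]} (hj : j ∈ Sph) (P d : ℝ) (S G : ℍ[ℝ]) :
    (2:ℝ)⁻¹ • ((P • S + d • G) + j * (P • (j * S) + (0:ℝ) • G)) = (2⁻¹ * d) • G := by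
  rw [zero_smul, add_zero, mul_smul_comm, ← mul_assoc, jsq hj, neg_one_mul, smul_neg]
  rw [show P • S + d • G + -(P • S) = d • G by abel, smul_smul]

lemma dbar_algR {j : ℍ[ℝ]} (hj : j ∈ Sph) (P d : ℝ) (S G : ℍ[ℝ]) :
    (2:ℝ)⁻¹ • ((P • S + d • G) + (P • (S * j) + (0:ℝ) • G) * j) = (2⁻¹ * d) • G := by
  rw [zero_smul, add_zero, smul_mul_assoc, mul_assoc, jsq hj, mul_neg_one, smul_neg]
  rw [show P • S + d • G + -(P • S) = d • G by abel, smul_smul]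

-- main step computation, left version
lemma stepL_main {j : ℍ[ℝ]} (hj : j ∈ Sph) (g₁ g₂ : ℂ → ℂ) (c₁ c₂ : ℍ[ℝ]) (ε a : ℝ) (n : ℕ)
    (p : ℝ × ℝ) (h1 : DifferentiableAt ℂ g₁ (ιL p)) (h2 : DifferentiableAt ℂ g₂ (ιL p)) :
    dbarL j (fun q => PD ε a n q • (PsiL j (g₁ (ιL q)) * c₁ + PsiL j (g₂ (ιL q)) * c₂)) p
      = (2⁻¹ * (((n:ℝ) * (ε*p.1+a)^(n-1) * ε) / n.factorial)) •
          (PsiL j (g₁ (ιL p)) * c₁ + PsiL j (g₂ (ιL p)) * c₂) := by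
  have hB := (blockR_hasFDerivAt j c₁ h1).add (blockR_hasFDerivAt j c₂ h2)
  have hF := (PD_hasFDerivAt ε a n p).smul hB
  unfold dbarL
  rw [(show HasFDerivAt (fun q => PD ε a n q • (PsiL j (g₁ (ιL q)) * c₁ + PsiL j (g₂ (ιL q)) * c₂)) _ p from hF).fderiv]
  have hIm : ∀ d : ℂ, PsiL j (Complex.I * d) = j * PsiL j d := fun d => by
    rw [PsiL_mul hj, PsiL_I]
  simp only [ContinuousLinearMap.add_apply, ContinuousLinearMap.coe_smul', Pi.smul_apply,
    ContinuousLinearMap.smulRight_apply, ContinuousLinearMap.coe_fst',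
    BR_apply, iotaL_10, iotaL_01, one_mul, hIm]
  rw [smul_eq_mul, smul_eq_mul, mul_one, mul_zero]
  rw [show j * PsiL j (deriv g₁ (ιL p)) * c₁ + j * PsiL j (deriv g₂ (ιL p)) * c₂
      = j * (PsiL j (deriv g₁ (ιL p)) * c₁ + PsiL j (deriv g₂ (ιL p)) * c₂) by
    rw [mul_add, mul_assoc, mul_assoc]]
  exact dbar_algL hj _ _ _ _

-- main step computation, right version
lemma stepR_main {j : ℍ[ℝ]} (hj : j ∈ Sph) (g₁ g₂ : ℂ → ℂ) (c₁ c₂ : ℍ[ℝ]) (ε a : ℝ) (n : ℕ)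
    (p : ℝ × ℝ) (h1 : DifferentiableAt ℂ g₁ (ιL p)) (h2 : DifferentiableAt ℂ g₂ (ιL p)) :
    dbarR j (fun q => PD ε a n q • (c₁ * PsiL j (g₁ (ιL q)) + c₂ * PsiL j (g₂ (ιL q)))) p
      = (2⁻¹ * (((n:ℝ) * (ε*p.1+a)^(n-1) * ε) / n.factorial)) •
          (c₁ * PsiL j (g₁ (ιL p)) + c₂ * PsiL j (g₂ (ιL p))) := by
  have hB := (blockL_hasFDerivAt j c₁ h1).add (blockL_hasFDerivAt j c₂ h2)
  have hF := (PD_hasFDerivAt ε a n p).smul hB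
  unfold dbarR
  rw [(show HasFDerivAt (fun q => PD ε a n q • (c₁ * PsiL j (g₁ (ιL q)) + c₂ * PsiL j (g₂ (ιL q)))) _ p from hF).fderiv]
  have hIm : ∀ d : ℂ, PsiL j (Complex.I * d) = PsiL j d * j := fun d => by
    rw [mul_comm, PsiL_mul hj, PsiL_I]
  simp only [ContinuousLinearMap.add_apply, ContinuousLinearMap.coe_smul', Pi.smul_apply,
    ContinuousLinearMap.smulRight_apply, ContinuousLinearMap.coe_fst',
    BL_apply, iotaL_10, iotaL_01, one_mul, hIm]
  rw [smul_eq_mul, smul_eq_mul, mul_one, mul_zero]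
  rw [show c₁ * (PsiL j (deriv g₁ (ιL p)) * j) + c₂ * (PsiL j (deriv g₂ (ιL p)) * j)
      = (c₁ * PsiL j (deriv g₁ (ιL p)) + c₂ * PsiL j (deriv g₂ (ιL p))) * j by
    rw [add_mul, mul_assoc, mul_assoc]]
  exact dbar_algR hj _ _ _ _

lemma qp_cont (t : ℍ[ℝ]) : Continuous (qp t) := by
  unfold qp
  exact ((continuous_pow 2).sub (continuous_const.mul continuous_id)).add continuous_const

lemma qp_isOpen (t : ℍ[ℝ]) : IsOpen {w : ℂ | qp t w ≠ 0} :=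
  isOpen_compl_singleton.preimage (qp_cont t)

lemma masterL {j : ℍ[ℝ]} (hj : j ∈ Sph) (W : Set ℂ) (hW : IsOpen W) (ε a : ℝ) :
    ∀ (n : ℕ) (g₁ g₂ : ℂ → ℂ), DifferentiableOn ℂ g₁ W → DifferentiableOn ℂ g₂ W →
    ∀ (c₁ c₂ : ℍ[ℝ]) (p : ℝ × ℝ), ιL p ∈ W →
    (dbarL j)^[n+1]
      (fun q => PD ε a n q • (PsiL j (g₁ (ιL q)) * c₁ + PsiL j (g₂ (ιL q)) * c₂)) p = 0 := by
  intro n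
  induction n with
  | zero =>
    intro g₁ g₂ hg₁ hg₂ c₁ c₂ p hp
    rw [Function.iterate_one, stepL_main hj g₁ g₂ c₁ c₂ ε a 0 p
      (hg₁.differentiableAt (hW.mem_nhds hp)) (hg₂.differentiableAt (hW.mem_nhds hp))]
    simp
  | succ n ih =>
    intro g₁ g₂ hg₁ hg₂ c₁ c₂ p hp
    rw [Function.iterate_succ_apply]
    have hV : IsOpen (ιL ⁻¹' W) := hW.preimage ιL.continuous
    have hfac : ((n+1).factorial : ℝ) = (n+1) * n.factorial := by
      rw [Nat.factorial_succ]; push_cast; ring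
    have hstep : ∀ q ∈ ιL ⁻¹' W,
        dbarL j (fun r => PD ε a (n+1) r • (PsiL j (g₁ (ιL r)) * c₁ + PsiL j (g₂ (ιL r)) * c₂)) q
          = (fun r => PD ε a n r • (PsiL j ((fun w => ((ε/2 : ℝ):ℂ) * g₁ w) (ιL r)) * c₁
              + PsiL j ((fun w => ((ε/2 : ℝ):ℂ) * g₂ w) (ιL r)) * c₂)) q := by
      intro q hq
      rw [stepL_main hj g₁ g₂ c₁ c₂ ε a (n+1) q
        (hg₁.differentiableAt (hW.mem_nhds hq)) (hg₂.differentiableAt (hW.mem_nhds hq))]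
      have hsc : (2⁻¹ * ((((n:ℕ)+1:ℕ):ℝ) * (ε*q.1+a)^((n+1)-1) * ε / ((n+1).factorial : ℝ)))
          = PD ε a n q * (ε/2) := by
        unfold PD
        rw [Nat.add_sub_cancel, hfac]
        have h1 : ((n:ℝ)+1) ≠ 0 := by positivity
        have h2 : (n.factorial : ℝ) ≠ 0 := Nat.cast_ne_zero.mpr (Nat.factorial_ne_zero n)
        field_simp
        push_cast
        ring
      push_cast at hsc ⊢
      rw [hsc, ← smul_smul]
      congr 1
      simp only [PsiL_mul hj, PsiL_real, Quaternion.coe_mul_eq_smul, smul_mul_assoc, smul_add]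
      rw [show ((ε:ℂ)/2) = (((ε/2:ℝ)):ℂ) by push_cast; ring]
      simp only [PsiL_real, Quaternion.coe_mul_eq_smul, smul_mul_assoc, mul_smul_comm]
    rw [dbarL_iter_congr hV j (n+1) hstep p hp]
    exact ih _ _ (hg₁.const_mul _) (hg₂.const_mul _) c₁ c₂ p hp

lemma masterR {j : ℍ[ℝ]} (hj : j ∈ Sph) (W : Set ℂ) (hW : IsOpen W) (ε a : ℝ) :
    ∀ (n : ℕ) (g₁ g₂ : ℂ → ℂ), DifferentiableOn ℂ g₁ W → DifferentiableOn ℂ g₂ W →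
    ∀ (c₁ c₂ : ℍ[ℝ]) (p : ℝ × ℝ), ιL p ∈ W →
    (dbarR j)^[n+1]
      (fun q => PD ε a n q • (c₁ * PsiL j (g₁ (ιL q)) + c₂ * PsiL j (g₂ (ιL q)))) p = 0 := by
  intro n
  induction n with
  | zero =>
    intro g₁ g₂ hg₁ hg₂ c₁ c₂ p hp
    rw [Function.iterate_one, stepR_main hj g₁ g₂ c₁ c₂ ε a 0 p
      (hg₁.differentiableAt (hW.mem_nhds hp)) (hg₂.differentiableAt (hW.mem_nhds hp))]
    simp
  | succ n ih =>
    intro g₁ g₂ hg₁ hg₂ c₁ c₂ p hp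
    rw [Function.iterate_succ_apply]
    have hV : IsOpen (ιL ⁻¹' W) := hW.preimage ιL.continuous
    have hfac : ((n+1).factorial : ℝ) = (n+1) * n.factorial := by
      rw [Nat.factorial_succ]; push_cast; ring
    have hstep : ∀ q ∈ ιL ⁻¹' W,
        dbarR j (fun r => PD ε a (n+1) r • (c₁ * PsiL j (g₁ (ιL r)) + c₂ * PsiL j (g₂ (ιL r)))) q
          = (fun r => PD ε a n r • (c₁ * PsiL j ((fun w => ((ε/2 : ℝ):ℂ) * g₁ w) (ιL r))
              + c₂ * PsiL j ((fun w => ((ε/2 : ℝ):ℂ) * g₂ w) (ιL r)))) q := by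
      intro q hq
      rw [stepR_main hj g₁ g₂ c₁ c₂ ε a (n+1) q
        (hg₁.differentiableAt (hW.mem_nhds hq)) (hg₂.differentiableAt (hW.mem_nhds hq))]
      have hsc : (2⁻¹ * ((((n:ℕ)+1:ℕ):ℝ) * (ε*q.1+a)^((n+1)-1) * ε / ((n+1).factorial : ℝ)))
          = PD ε a n q * (ε/2) := by
        unfold PD
        rw [Nat.add_sub_cancel, hfac]
        have h1 : ((n:ℝ)+1) ≠ 0 := by positivity
        have h2 : (n.factorial : ℝ) ≠ 0 := Nat.cast_ne_zero.mpr (Nat.factorial_ne_zero n)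
        field_simp
        push_cast
        ring
      push_cast at hsc ⊢
      rw [hsc, ← smul_smul]
      congr 1
      simp only [PsiL_mul hj, PsiL_real, Quaternion.coe_mul_eq_smul, mul_smul_comm, smul_add]
      rw [show ((ε:ℂ)/2) = (((ε/2:ℝ)):ℂ) by push_cast; ring]
      simp only [PsiL_real, Quaternion.coe_mul_eq_smul, smul_mul_assoc, mul_smul_comm]
    rw [dbarR_iter_congr hV j (n+1) hstep p hp]
    exact ih _ _ (hg₁.const_mul _) (hg₂.const_mul _) c₁ c₂ p hp

-- slice components
def F0 (g₁ g₂ : ℂ → ℂ) (c₁ c₂ : ℍ[ℝ]) (ε a : ℝ) (n : ℕ) : ℝ × ℝ → ℍ[ℝ] :=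
  fun q => PD ε a n q • ((g₁ (ιL q)).re • c₁ + (g₂ (ιL q)).re • c₂)

def F1 (g₁ g₂ : ℂ → ℂ) (c₁ c₂ : ℍ[ℝ]) (ε a : ℝ) (n : ℕ) : ℝ × ℝ → ℍ[ℝ] :=
  fun q => PD ε a n q • ((g₁ (ιL q)).im • c₁ + (g₂ (ιL q)).im • c₂)

lemma glueL {j : ℍ[ℝ]} (hj : j ∈ Sph) (g₁ g₂ : ℂ → ℂ) (c₁ c₂ : ℍ[ℝ]) (ε a : ℝ) (n : ℕ)
    (q : ℝ × ℝ) :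
    F0 g₁ g₂ c₁ c₂ ε a n q + j * F1 g₁ g₂ c₁ c₂ ε a n q
      = PD ε a n q • (PsiL j (g₁ (ιL q)) * c₁ + PsiL j (g₂ (ιL q)) * c₂) := by
  have hz : ∀ (z : ℂ) (c : ℍ[ℝ]), PsiL j z * c = z.re • c + j * (z.im • c) := by
    intro z c
    rw [PsiL_apply, add_mul, Quaternion.coe_mul_eq_smul, smul_mul_assoc, mul_smul_comm]
  rw [hz, hz]
  unfold F0 F1
  rw [mul_smul_comm, ← smul_add]
  congr 1
  rw [mul_add]
  abel

lemma glueR {j : ℍ[ℝ]} (hj : j ∈ Sph) (g₁ g₂ : ℂ → ℂ) (c₁ c₂ : ℍ[ℝ]) (ε a : ℝ) (n : ℕ)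
    (q : ℝ × ℝ) :
    F0 g₁ g₂ c₁ c₂ ε a n q + F1 g₁ g₂ c₁ c₂ ε a n q * j
      = PD ε a n q • (c₁ * PsiL j (g₁ (ιL q)) + c₂ * PsiL j (g₂ (ιL q))) := by
  have hz : ∀ (z : ℂ) (c : ℍ[ℝ]), c * PsiL j z = z.re • c + (z.im • c) * j := by
    intro z c
    rw [PsiL_apply, mul_add, Quaternion.mul_coe_eq_smul, mul_smul_comm, smul_mul_assoc]
  rw [hz, hz]
  unfold F0 F1
  rw [smul_mul_assoc, ← smul_add]
  congr 1
  rw [add_mul]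
  abel

lemma smoothF (N : ℕ∞) (t : ℍ[ℝ]) {g₁ g₂ : ℂ → ℂ}
    (hg₁ : DifferentiableOn ℂ g₁ {w | qp t w ≠ 0}) (hg₂ : DifferentiableOn ℂ g₂ {w | qp t w ≠ 0})
    (T : ℂ →L[ℝ] ℝ) (c₁ c₂ : ℍ[ℝ]) (ε a : ℝ) (n : ℕ) :
    ContDiffOn ℝ N (fun q => PD ε a n q • (T (g₁ (ιL q)) • c₁ + T (g₂ (ιL q)) • c₂))
      {q : ℝ × ℝ | qp t (ιL q) ≠ 0} := by
  have hWo := qp_isOpen t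
  have hmap : Set.MapsTo (fun q : ℝ × ℝ => ιL q) {q : ℝ × ℝ | qp t (ιL q) ≠ 0}
      {w : ℂ | qp t w ≠ 0} := fun q hq => hq
  have h1 : ContDiffOn ℝ N (fun q : ℝ × ℝ => g₁ (ιL q)) {q : ℝ × ℝ | qp t (ιL q) ≠ 0} :=
    ((hg₁.contDiffOn hWo).restrict_scalars ℝ).comp (ιL.contDiff.contDiffOn) hmap
  have h2 : ContDiffOn ℝ N (fun q : ℝ × ℝ => g₂ (ιL q)) {q : ℝ × ℝ | qp t (ιL q) ≠ 0} :=
    ((hg₂.contDiffOn hWo).restrict_scalars ℝ).comp (ιL.contDiff.contDiffOn) hmap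
  have hPD : ContDiff ℝ N (PD ε a n) := by
    unfold PD
    exact (((contDiff_const.mul contDiff_fst).add contDiff_const).pow n).div_const _
  exact hPD.contDiffOn.smul
    (((T.contDiff.comp_contDiffOn h1).smul contDiffOn_const).add
      ((T.contDiff.comp_contDiffOn h2).smul contDiffOn_const))

-- differentiability of the building blocks
lemma diff_qp (t : ℍ[ℝ]) : Differentiable ℂ (qp t) := by
  unfold qp
  exact ((differentiable_id.pow 2).sub ((differentiable_const _).mul differentiable_id)).add
    (differentiable_const _)

lemma diff_gB (t : ℍ[ℝ]) :
    DifferentiableOn ℂ (fun w => (qp t w)⁻¹) {w : ℂ | qp t w ≠ 0} :=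
  ((diff_qp t).differentiableOn).inv (fun _ hw => hw)

lemma diff_gA (t : ℍ[ℝ]) :
    DifferentiableOn ℂ (fun w => -((qp t w)⁻¹ * w)) {w : ℂ | qp t w ≠ 0} :=
  ((diff_gB t).mul differentiableOn_id).neg

lemma diff_gC (t : ℍ[ℝ]) :
    DifferentiableOn ℂ (fun w => (qp t w)⁻¹ * w) {w : ℂ | qp t w ≠ 0} :=
  (diff_gB t).mul differentiableOn_id

lemma diff_gBneg (t : ℍ[ℝ]) :
    DifferentiableOn ℂ (fun w => -(qp t w)⁻¹) {w : ℂ | qp t w ≠ 0} :=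
  (diff_gB t).neg

lemma slice_qp_ne (t : ℍ[ℝ]) {p : ℝ × ℝ} (hp : p ∈ slicePlane (assocSphere t)ᶜ) :
    qp t (ιL p) ≠ 0 := by
  have hmem : ((p.1:ℍ[ℝ]) + p.2 • jj) ∈ (assocSphere t)ᶜ := hp jj jj_mem
  rw [← psil_iota jj p] at hmem
  intro h0
  apply qker_ne_zero hmem
  rw [PsiL_Qker jj_mem, h0, map_zero]

-- variant packaging
lemma variantL (U : Set ℍ[ℝ]) (t : ℍ[ℝ]) (F : ℍ[ℝ] → ℍ[ℝ])
    (hsub : ∀ p ∈ slicePlane U, qp t (ιL p) ≠ 0)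
    {g₁ g₂ : ℂ → ℂ} (hg₁ : DifferentiableOn ℂ g₁ {w : ℂ | qp t w ≠ 0})
    (hg₂ : DifferentiableOn ℂ g₂ {w : ℂ | qp t w ≠ 0})
    (c₁ c₂ : ℍ[ℝ]) (ε a : ℝ) (ℓ : ℕ)
    (hker : ∀ p ∈ slicePlane U, ∀ j ∈ Sph, F ((p.1:ℍ[ℝ]) + p.2 • j)
        = PD ε a ℓ p • (PsiL j (g₁ (ιL p)) * c₁ + PsiL j (g₂ (ιL p)) * c₂)) :
    PolySliceMonL U (ℓ+1) F := by
  refine ⟨F0 g₁ g₂ c₁ c₂ ε a ℓ, F1 g₁ g₂ c₁ c₂ ε a ℓ, ?_, ?_, ?_, ?_⟩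
  · intro p hp j hj
    rw [hker p hp j hj]
    exact (glueL hj g₁ g₂ c₁ c₂ ε a ℓ p).symm
  · exact (smoothF (ℓ+1) t hg₁ hg₂ Complex.reCLM c₁ c₂ ε a ℓ).mono fun p hp => hsub p hp
  · exact (smoothF (ℓ+1) t hg₁ hg₂ Complex.imCLM c₁ c₂ ε a ℓ).mono fun p hp => hsub p hp
  · intro j hj p hp
    have he : (fun q => F0 g₁ g₂ c₁ c₂ ε a ℓ q + j * F1 g₁ g₂ c₁ c₂ ε a ℓ q)
        = fun q => PD ε a ℓ q • (PsiL j (g₁ (ιL q)) * c₁ + PsiL j (g₂ (ιL q)) * c₂) :=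
      funext (glueL hj g₁ g₂ c₁ c₂ ε a ℓ)
    rw [he]
    exact masterL hj _ (qp_isOpen t) ε a ℓ g₁ g₂ hg₁ hg₂ c₁ c₂ p (hsub p hp)

lemma variantR (U : Set ℍ[ℝ]) (t : ℍ[ℝ]) (F : ℍ[ℝ] → ℍ[ℝ])
    (hsub : ∀ p ∈ slicePlane U, qp t (ιL p) ≠ 0)
    {g₁ g₂ : ℂ → ℂ} (hg₁ : DifferentiableOn ℂ g₁ {w : ℂ | qp t w ≠ 0})
    (hg₂ : DifferentiableOn ℂ g₂ {w : ℂ | qp t w ≠ 0})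
    (c₁ c₂ : ℍ[ℝ]) (ε a : ℝ) (ℓ : ℕ)
    (hker : ∀ p ∈ slicePlane U, ∀ j ∈ Sph, F ((p.1:ℍ[ℝ]) + p.2 • j)
        = PD ε a ℓ p • (c₁ * PsiL j (g₁ (ιL p)) + c₂ * PsiL j (g₂ (ιL p)))) :
    PolySliceMonR U (ℓ+1) F := by
  refine ⟨F0 g₁ g₂ c₁ c₂ ε a ℓ, F1 g₁ g₂ c₁ c₂ ε a ℓ, ?_, ?_, ?_, ?_⟩
  · intro p hp j hj
    rw [hker p hp j hj]
    exact (glueR hj g₁ g₂ c₁ c₂ ε a ℓ p).symm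
  · exact (smoothF (ℓ+1) t hg₁ hg₂ Complex.reCLM c₁ c₂ ε a ℓ).mono fun p hp => hsub p hp
  · exact (smoothF (ℓ+1) t hg₁ hg₂ Complex.imCLM c₁ c₂ ε a ℓ).mono fun p hp => hsub p hp
  · intro j hj p hp
    have he : (fun q => F0 g₁ g₂ c₁ c₂ ε a ℓ q + F1 g₁ g₂ c₁ c₂ ε a ℓ q * j)
        = fun q => PD ε a ℓ q • (c₁ * PsiL j (g₁ (ιL q)) + c₂ * PsiL j (g₂ (ιL q))) :=
      funext (glueR hj g₁ g₂ c₁ c₂ ε a ℓ)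
    rw [he]
    exact masterR hj _ (qp_isOpen t) ε a ℓ g₁ g₂ hg₁ hg₂ c₁ c₂ p (hsub p hp)

-- slice identities
lemma sliceV1 (s : ℍ[ℝ]) {j : ℍ[ℝ]} (hj : j ∈ Sph) (ℓ : ℕ) (p : ℝ × ℝ) :
    PkL ℓ s ((p.1:ℍ[ℝ]) + p.2 • j)
      = PD (-1) s.re ℓ p • (PsiL j ((fun w => -((qp s w)⁻¹ * w)) (ιL p)) * 1
          + PsiL j ((fun w => (qp s w)⁻¹) (ιL p)) * star s) := by
  rw [← psil_iota j p]
  unfold PkL SL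
  rw [PsiL_Qker hj, ← PsiL_inv hj]
  have hre : (s - PsiL j (ιL p)).re = -1 * p.1 + s.re := by
    rw [Quaternion.re_sub, PsiL_re hj, ιL_re]; ring
  rw [hre, Quaternion.coe_mul_eq_smul]
  congr 1
  rw [map_neg, mul_one, mul_sub, ← PsiL_mul hj, neg_sub, sub_eq_neg_add]

lemma sliceV3 (s : ℍ[ℝ]) {j : ℍ[ℝ]} (hj : j ∈ Sph) (ℓ : ℕ) (p : ℝ × ℝ) :
    PkR ℓ s ((p.1:ℍ[ℝ]) + p.2 • j)
      = PD (-1) s.re ℓ p • ((1:ℍ[ℝ]) * PsiL j ((fun w => -((qp s w)⁻¹ * w)) (ιL p))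
          + star s * PsiL j ((fun w => (qp s w)⁻¹) (ιL p))) := by
  rw [← psil_iota j p]
  unfold PkR SR
  rw [PsiL_Qker hj, ← PsiL_inv hj]
  have hre : (s - PsiL j (ιL p)).re = -1 * p.1 + s.re := by
    rw [Quaternion.re_sub, PsiL_re hj, ιL_re]; ring
  rw [hre, Quaternion.coe_mul_eq_smul]
  congr 1
  rw [map_neg, one_mul, sub_mul, ← PsiL_mul hj, neg_sub,
    mul_comm (ιL p) ((qp s (ιL p))⁻¹), sub_eq_neg_add]

lemma sliceV2 (x : ℍ[ℝ]) {j : ℍ[ℝ]} (hj : j ∈ Sph) (ℓ : ℕ) (p : ℝ × ℝ)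
    (hQ1 : Qker (PsiL j (ιL p)) x ≠ 0) (hQ2 : Qker x (PsiL j (ιL p)) ≠ 0) :
    PkL ℓ (PsiL j (ιL p)) x
      = PD 1 (-x.re) ℓ p • ((1:ℍ[ℝ]) * PsiL j ((fun w => (qp x w)⁻¹ * w) (ιL p))
          + star x * PsiL j ((fun w => -(qp x w)⁻¹) (ιL p))) := by
  unfold PkL SL
  rw [formII_L _ _ hQ1 hQ2, PsiL_Qker hj, ← PsiL_inv hj]
  have hre : (PsiL j (ιL p) - x).re = 1 * p.1 + -x.re := by
    rw [Quaternion.re_sub, PsiL_re hj, ιL_re]; ring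
  rw [hre, Quaternion.coe_mul_eq_smul]
  congr 1
  rw [map_neg, one_mul, mul_neg, sub_mul, ← PsiL_mul hj,
    mul_comm (ιL p) ((qp x (ιL p))⁻¹), sub_eq_add_neg]

lemma sliceV4 (x : ℍ[ℝ]) {j : ℍ[ℝ]} (hj : j ∈ Sph) (ℓ : ℕ) (p : ℝ × ℝ)
    (hQ1 : Qker (PsiL j (ιL p)) x ≠ 0) (hQ2 : Qker x (PsiL j (ιL p)) ≠ 0) :
    PkR ℓ (PsiL j (ιL p)) x
      = PD 1 (-x.re) ℓ p • (PsiL j ((fun w => (qp x w)⁻¹ * w) (ιL p)) * 1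
          + PsiL j ((fun w => -(qp x w)⁻¹) (ιL p)) * star x) := by
  unfold PkR SR
  rw [formII_R _ _ hQ1 hQ2, PsiL_Qker hj, ← PsiL_inv hj]
  have hre : (PsiL j (ιL p) - x).re = 1 * p.1 + -x.re := by
    rw [Quaternion.re_sub, PsiL_re hj, ιL_re]; ring
  rw [hre, Quaternion.coe_mul_eq_smul]
  congr 1
  rw [map_neg, mul_one, neg_mul, mul_sub, ← PsiL_mul hj, sub_eq_add_neg]

end Helper


/-- Poly slice monogenicity of the kernels `P_ℓ S_L⁻¹` and `P_ℓ S_R⁻¹`. -/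
theorem statement7 (ℓ : ℕ) :
    (∀ s : ℍ[ℝ], IsOpen (assocSphere s)ᶜ ∧ AxiallySymmetric (assocSphere s)ᶜ) ∧
    (∀ s : ℍ[ℝ], PolySliceMonL (assocSphere s)ᶜ (ℓ + 1) (fun x => PkL ℓ s x)) ∧
    (∀ x : ℍ[ℝ], PolySliceMonR (assocSphere x)ᶜ (ℓ + 1) (fun s => PkL ℓ s x)) ∧
    (∀ s : ℍ[ℝ], PolySliceMonR (assocSphere s)ᶜ (ℓ + 1) (fun x => PkR ℓ s x)) ∧
    (∀ x : ℍ[ℝ], PolySliceMonL (assocSphere x)ᶜ (ℓ + 1) (fun s => PkR ℓ s x)) := by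
  refine ⟨fun s => ⟨Helper.isOpen_compl_assoc s, Helper.axSymm_compl_assoc s⟩, ?_, ?_, ?_, ?_⟩
  · intro s
    exact Helper.variantL ((assocSphere s)ᶜ) s _ (fun p hp => Helper.slice_qp_ne s hp)
      (Helper.diff_gA s) (Helper.diff_gB s) 1 (star s) (-1) s.re ℓ
      (fun p hp j hj => Helper.sliceV1 s hj ℓ p)
  · intro x
    refine Helper.variantR ((assocSphere x)ᶜ) x _ (fun p hp => Helper.slice_qp_ne x hp)
      (Helper.diff_gC x) (Helper.diff_gBneg x) 1 (star x) 1 (-x.re) ℓ ?_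
    intro p hp j hj
    have hmem : Helper.PsiL j (Helper.ιL p) ∉ assocSphere x := by
      rw [Helper.psil_iota j p]; exact hp j hj
    have hQ2 : Qker x (Helper.PsiL j (Helper.ιL p)) ≠ 0 := Helper.qker_ne_zero hmem
    have hQ1 : Qker (Helper.PsiL j (Helper.ιL p)) x ≠ 0 :=
      Helper.qker_ne_zero (fun hc => hmem (Helper.assoc_symm.mp hc))
    have := Helper.sliceV2 x hj ℓ p hQ1 hQ2
    rw [← Helper.psil_iota j p]
    exact this
  · intro s
    exact Helper.variantR ((assocSphere s)ᶜ) s _ (fun p hp => Helper.slice_qp_ne s hp)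
      (Helper.diff_gA s) (Helper.diff_gB s) 1 (star s) (-1) s.re ℓ
      (fun p hp j hj => Helper.sliceV3 s hj ℓ p)
  · intro x
    refine Helper.variantL ((assocSphere x)ᶜ) x _ (fun p hp => Helper.slice_qp_ne x hp)
      (Helper.diff_gC x) (Helper.diff_gBneg x) 1 (star x) 1 (-x.re) ℓ ?_
    intro p hp j hj
    have hmem : Helper.PsiL j (Helper.ιL p) ∉ assocSphere x := by
      rw [Helper.psil_iota j p]; exact hp j hj
    have hQ2 : Qker x (Helper.PsiL j (Helper.ιL p)) ≠ 0 := Helper.qker_ne_zero hmem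
    have hQ1 : Qker (Helper.PsiL j (Helper.ιL p)) x ≠ 0 :=
      Helper.qker_ne_zero (fun hc => hmem (Helper.assoc_symm.mp hc))
    have := Helper.sliceV4 x hj ℓ p hQ1 hQ2
    rw [← Helper.psil_iota j p]
    exact this
end
end
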